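/- arXiv:1103.2692 — 5 statements merged into one kernel-verified Lean document; each statement's English description precedes it below -/
import Mathlib

section
/- For any q ≥ 0, t ≥ -2q, u > 0, v ≥ 0 with (t+2q)/u < v, and any fixed sequence ξ with Σ_i ξ_i² i^{2q} < ∞, one has N^{(t+2q)/u} · Σ_{i=1}^∞ ξ_i² i^{-t}/(1+N i^{-u})^v → 0 as N → ∞. -/
/-!
Dominated convergence for series. With `α = (t + 2q)/u` and `x = N i⁻ᵘ`, the `i`-th term
`Nᵅ ξᵢ² i⁻ᵗ / (1 + x)ᵛ` equals `ξᵢ² i²ᵠ · xᵅ / (1 + x)ᵛ ≤ ξᵢ² i²ᵠ` because `0 ≤ α ≤ v`: a summable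
bound independent of `N`. For fixed `i` the term decays like `N^(α - v) → 0`.
-/

open Filter Topology Real

lemma rpow_le_one_add_rpow {x α v : ℝ} (hx : 0 ≤ x) (hα : 0 ≤ α) (hαv : α ≤ v) :
    x ^ α ≤ (1 + x) ^ v :=
  calc x ^ α ≤ (1 + x) ^ α := rpow_le_rpow hx (by linarith) hα
    _ ≤ (1 + x) ^ v := rpow_le_rpow_of_exponent_le (by linarith) hαv

lemma tendsto_rpow_div_one_add_mul_rpow_atTop {α v d : ℝ} (hv : 0 ≤ v) (hαv : α < v)
    (hd : 0 < d) : Tendsto (fun N : ℝ => N ^ α / (1 + N * d) ^ v) atTop (𝓝 0) := by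
  have hdecay : Tendsto (fun N : ℝ => N ^ (α - v) / d ^ v) atTop (𝓝 0) := by
    simpa [neg_sub] using (tendsto_rpow_neg_atTop (y := v - α) (by linarith)).div_const (d ^ v)
  refine squeeze_zero' ?_ ?_ hdecay
  · filter_upwards [eventually_gt_atTop 0] with N hN
    positivity
  · filter_upwards [eventually_gt_atTop 0] with N hN
    calc N ^ α / (1 + N * d) ^ v ≤ N ^ α / (N * d) ^ v := by
          gcongr
          linarith
      _ = N ^ (α - v) / d ^ v := by
          rw [mul_rpow hN.le hd.le, rpow_sub hN, div_div]

lemma rpow_mul_rpow_neg_div_le {N s t p u v : ℝ} (hN : 0 ≤ N) (hs : 0 < s) (hu : 0 < u)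
    (hα : 0 ≤ (t + p) / u) (hαv : (t + p) / u ≤ v) :
    N ^ ((t + p) / u) * (s ^ (-t) / (1 + N * s ^ (-u)) ^ v) ≤ s ^ p := by
  set x := N * s ^ (-u)
  have hx : 0 ≤ x := by positivity
  have hxα : x ^ ((t + p) / u) = N ^ ((t + p) / u) * s ^ (-(t + p)) := by
    rw [mul_rpow hN (by positivity), ← rpow_mul hs.le]
    congr 2
    field_simp
  have hsplit : N ^ ((t + p) / u) * s ^ (-t) = s ^ p * x ^ ((t + p) / u) := by
    rw [hxα, mul_left_comm, ← rpow_add hs]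
    ring_nf
  rw [← mul_div_assoc, hsplit, div_le_iff₀ (by positivity)]
  exact mul_le_mul_of_nonneg_left (rpow_le_one_add_rpow hx hα hαv) (by positivity)

theorem stmt1_general (q t u v : ℝ) (ht : -2 * q ≤ t) (hu : 0 < u)
    (hlt : (t + 2 * q) / u < v) (ξ : ℕ → ℝ)
    (hξ : Summable (fun i : ℕ => (ξ i) ^ 2 * ((i : ℝ) + 1) ^ (2 * q))) :
    Tendsto (fun N : ℝ =>
        N ^ ((t + 2 * q) / u) *
          ∑' i : ℕ, (ξ i) ^ 2 * ((i : ℝ) + 1) ^ (-t) / (1 + N * ((i : ℝ) + 1) ^ (-u)) ^ v)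
      atTop (nhds 0) := by
  have hα : 0 ≤ (t + 2 * q) / u := div_nonneg (by linarith) hu.le
  have hterm : ∀ i : ℕ, Tendsto (fun N : ℝ => N ^ ((t + 2 * q) / u) *
      ((ξ i) ^ 2 * ((i : ℝ) + 1) ^ (-t) / (1 + N * ((i : ℝ) + 1) ^ (-u)) ^ v)) atTop (𝓝 0) := by
    intro i
    have := (tendsto_rpow_div_one_add_mul_rpow_atTop (hα.trans hlt.le) hlt
      (rpow_pos_of_pos (Nat.cast_add_one_pos i) (-u))).const_mul ((ξ i) ^ 2 * ((i : ℝ) + 1) ^ (-t))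
    rw [mul_zero] at this
    exact this.congr fun N => by ring
  have hbound : ∀ᶠ N : ℝ in atTop, ∀ i : ℕ, ‖N ^ ((t + 2 * q) / u) *
      ((ξ i) ^ 2 * ((i : ℝ) + 1) ^ (-t) / (1 + N * ((i : ℝ) + 1) ^ (-u)) ^ v)‖ ≤
        (ξ i) ^ 2 * ((i : ℝ) + 1) ^ (2 * q) := by
    filter_upwards [eventually_gt_atTop 0] with N hN i
    have hs : (0 : ℝ) < (i : ℝ) + 1 := Nat.cast_add_one_pos i
    rw [norm_of_nonneg (by positivity), mul_div_assoc, mul_left_comm]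
    exact mul_le_mul_of_nonneg_left (rpow_mul_rpow_neg_div_le hN.le hs hu hα hlt.le) (sq_nonneg _)
  simpa only [tsum_mul_left, tsum_zero] using
    tendsto_tsum_of_dominated_convergence hξ hterm hbound

/-- For fixed `ξ ∈ S^q` and `(t+2q)/u < v`, the rescaled series tends to 0. -/
theorem stmt1 (q t u v : ℝ) (hq : 0 ≤ q) (ht : -2 * q ≤ t) (hu : 0 < u) (hv : 0 ≤ v)
    (hlt : (t + 2 * q) / u < v) (ξ : ℕ → ℝ)
    (hξ : Summable (fun i : ℕ => (ξ i) ^ 2 * ((i : ℝ) + 1) ^ (2 * q))) :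
    Tendsto (fun N : ℝ =>
        N ^ ((t + 2 * q) / u) *
          ∑' i : ℕ, (ξ i) ^ 2 * ((i : ℝ) + 1) ^ (-t) / (1 + N * ((i : ℝ) + 1) ^ (-u)) ^ v)
      atTop (nhds 0) :=
  stmt1_general q t u v ht hu hlt ξ hξ
end

section
/- For any q ≥ 0, t ≥ -2q, u > 0, v ≥ 0 with (t+2q)/u ≥ v, and any fixed sequence ξ with Σ_i ξ_i² i^{2q} < ∞, one has N^v · Σ_{i=1}^∞ ξ_i² i^{-t}/(1+N i^{-u})^v → Σ_{i=1}^∞ ξ_i² i^{uv-t} as N → ∞ (the limit being finite since ξ ∈ S^{(uv-t)/2}). -/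
open Filter Topology

/-
With `x = i + 1` and `a = x^{-u}`, the `i`-th term of `N^v ∑ …` is `ξ_i² x^{-t} (N / (1 + N a))^v`.
The factor `N / (1 + N a)` increases to `a⁻¹ = x^u` as `N → ∞`, so the terms increase to
`ξ_i² x^{uv-t}`, which is at most `ξ_i² x^{2q}` because `uv - t ≤ 2q` and `x ≥ 1`.
Tannery's theorem (dominated convergence for series) then gives the limit.
-/

lemma div_one_add_mul_le_inv {a N : ℝ} (ha : 0 < a) (hN : 0 ≤ N) :
    N / (1 + N * a) ≤ a⁻¹ := by
  rw [div_le_iff₀ (by positivity), mul_add, mul_comm N, inv_mul_cancel_left₀ ha.ne']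
  linarith [inv_pos.mpr ha]

lemma tendsto_div_one_add_mul_atTop {a : ℝ} (ha : 0 < a) :
    Tendsto (fun N : ℝ => N / (1 + N * a)) atTop (𝓝 a⁻¹) := by
  have h : Tendsto (fun N : ℝ => (N⁻¹ + a)⁻¹) atTop (𝓝 a⁻¹) := by
    simpa using (tendsto_inv_atTop_zero.add_const a).inv₀ (by simpa using ha.ne')
  refine h.congr' ?_
  filter_upwards [eventually_gt_atTop 0] with N hN
  field_simp

theorem tendsto_tsum_mul_div_one_add_mul_rpow {ι : Type*} {w a : ι → ℝ} {v : ℝ}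
    (hw : ∀ i, 0 ≤ w i) (ha : ∀ i, 0 < a i) (hv : 0 ≤ v)
    (hsum : Summable fun i => w i * (a i)⁻¹ ^ v) :
    Tendsto (fun N : ℝ => ∑' i, w i * (N / (1 + N * a i)) ^ v) atTop
      (𝓝 (∑' i, w i * (a i)⁻¹ ^ v)) := by
  refine tendsto_tsum_of_dominated_convergence hsum (fun i => ?_) ?_
  · exact ((tendsto_div_one_add_mul_atTop (ha i)).rpow_const
      (Or.inl (inv_pos.mpr (ha i)).ne')).const_mul (w i)
  · filter_upwards [eventually_ge_atTop 0] with N hN i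
    have hD : 0 ≤ N / (1 + N * a i) := div_nonneg hN (by nlinarith [ha i])
    rw [Real.norm_of_nonneg (mul_nonneg (hw i) (Real.rpow_nonneg hD v))]
    exact mul_le_mul_of_nonneg_left
      (Real.rpow_le_rpow hD (div_one_add_mul_le_inv (ha i) hN) hv) (hw i)

theorem stmt2_general (q t u v : ℝ) (hu : 0 < u) (hv : 0 ≤ v)
    (hge : v ≤ (t + 2 * q) / u) (ξ : ℕ → ℝ)
    (hξ : Summable (fun i : ℕ => (ξ i) ^ 2 * ((i : ℝ) + 1) ^ (2 * q))) :
    Tendsto (fun N : ℝ =>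
        N ^ v *
          ∑' i : ℕ, (ξ i) ^ 2 * ((i : ℝ) + 1) ^ (-t) / (1 + N * ((i : ℝ) + 1) ^ (-u)) ^ v)
      atTop (nhds (∑' i : ℕ, (ξ i) ^ 2 * ((i : ℝ) + 1) ^ (u * v - t))) := by
  have huv : u * v - t ≤ 2 * q := by
    have := (le_div_iff₀ hu).mp hge
    linarith
  have hx : ∀ i : ℕ, (0 : ℝ) < (i : ℝ) + 1 := fun i => by positivity
  have hweight : ∀ i : ℕ, ((i : ℝ) + 1) ^ (-t) * (((i : ℝ) + 1) ^ (-u))⁻¹ ^ v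
      = ((i : ℝ) + 1) ^ (u * v - t) := fun i => by
    rw [← Real.rpow_neg_one, ← Real.rpow_mul (hx i).le, ← Real.rpow_mul (hx i).le,
      ← Real.rpow_add (hx i)]
    ring_nf
  have hsum : Summable fun i : ℕ => (ξ i) ^ 2 * ((i : ℝ) + 1) ^ (u * v - t) :=
    hξ.of_nonneg_of_le (fun i => by positivity) fun i =>
      mul_le_mul_of_nonneg_left (Real.rpow_le_rpow_of_exponent_le (by simp) huv) (sq_nonneg _)
  have key := tendsto_tsum_mul_div_one_add_mul_rpow
    (w := fun i : ℕ => (ξ i) ^ 2 * ((i : ℝ) + 1) ^ (-t)) (fun i => by positivity)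
    (fun i => Real.rpow_pos_of_pos (hx i) (-u)) hv (by simpa only [mul_assoc, hweight] using hsum)
  simp only [mul_assoc, hweight] at key
  refine key.congr' ?_
  filter_upwards [eventually_gt_atTop 0] with N hN
  rw [← tsum_mul_left]
  refine tsum_congr fun i => ?_
  rw [Real.div_rpow hN.le (by positivity)]
  field_simp

/-- For fixed `ξ ∈ S^q` and `(t+2q)/u ≥ v`, `N^v` times the series converges to
`∑ ξ_i² i^{uv - t}`, i.e. the squared `S^{(uv-t)/2}`-norm of `ξ`. -/
theorem stmt2 (q t u v : ℝ) (hq : 0 ≤ q) (ht : -2 * q ≤ t) (hu : 0 < u) (hv : 0 ≤ v)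
    (hge : v ≤ (t + 2 * q) / u) (ξ : ℕ → ℝ)
    (hξ : Summable (fun i : ℕ => (ξ i) ^ 2 * ((i : ℝ) + 1) ^ (2 * q))) :
    Tendsto (fun N : ℝ =>
        N ^ v *
          ∑' i : ℕ, (ξ i) ^ 2 * ((i : ℝ) + 1) ^ (-t) / (1 + N * ((i : ℝ) + 1) ^ (-u)) ^ v)
      atTop (nhds (∑' i : ℕ, (ξ i) ^ 2 * ((i : ℝ) + 1) ^ (u * v - t))) :=
  stmt2_general q t u v hu hv hge ξ hξ
end

section
/- Under the Bayesian sequence model with κ_i ≍ i^{-p} and λ_i = τ_n² i^{-1-2α}, the trace of the posterior covariance satisfies Σ_i λ_i/(1+nλ_iκ_i²) ≍ τ_n² (nτ_n²)^{-2α/(1+2α+2p)} as n → ∞, and the variance of the posterior mean satisfies Σ_i nλ_i²κ_i²/(1+nλ_iκ_i²)² ≍ τ_n² (nτ_n²)^{-2α/(1+2α+2p)} as well. -/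
/-!
Put `β = 1 + 2α + 2p` and `N = (nτ_n²)^{1/β}`; then the rate is `τ_n² N^{-2α}` and the ratios
`x_i = nλ_iκ_i²` are of order `(N/(i+1))^β`. For the upper bound, a term `λ_i/(1+x_i)` with
`i < N` is at most `λ_i/x_i ≲ τ_n² N^{2p-β}`, so these `⌈N⌉` terms contribute
`≲ τ_n² N^{1+2p-β} = τ_n² N^{-2α}`; the remaining terms are at most `λ_i`, whose tail from `N` is
`≲ τ_n² N^{-2α}` by the integral test. For the lower bound, the `⌈N⌉` indices with
`N ≤ i+1 ≤ 3N` have `x_i` bounded above and below by constants and `λ_i ≳ τ_n² N^{-1-2α}`.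
Since `x/(1+x)² ≤ 1/(1+x)`, the second sum is dominated termwise by the first.
-/

open Filter Topology Finset

lemma summable_rpow_succ {q : ℝ} (hq : q < -1) : Summable (fun i : ℕ => ((i : ℝ) + 1) ^ q) := by
  simpa using (summable_nat_add_iff 1).mpr (Real.summable_nat_rpow.mpr hq)

lemma tsum_rpow_nat_add_ceil_le {r N : ℝ} (hr : 0 < r) (hN : 0 < N) :
    ∑' i : ℕ, (((i + ⌈N⌉₊ : ℕ) : ℝ) + 1) ^ (-1 - r) ≤ N ^ (-r) / r := by
  set K := ⌈N⌉₊
  have hK : (0 : ℝ) < K := Nat.cast_pos.mpr (Nat.ceil_pos.mpr hN)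
  have hexp : -1 - r < -1 := by linarith
  calc _ ≤ ∫ t in Set.Ioi (K : ℝ), t ^ (-1 - r) := by
        push_cast
        exact_mod_cast AntitoneOn.tsum_comp_add_le_integral K
          (fun s hs t _ hst => Real.rpow_le_rpow_of_nonpos (hK.trans_le hs) hst (by linarith))
          (integrableOn_Ioi_rpow_of_lt hexp hK)
          (fun t ht => Real.rpow_nonneg (hK.trans ht).le _)
    _ = (K : ℝ) ^ (-r) / r := by
        rw [integral_Ioi_rpow_of_lt hexp hK, show -1 - r + 1 = -r by ring, neg_div_neg_eq]
    _ ≤ N ^ (-r) / r := div_le_div_of_nonneg_right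
        (Real.rpow_le_rpow_of_nonpos hN (Nat.le_ceil N) (by linarith)) hr.le

lemma mul_le_tsum_of_le_on_window {f : ℕ → ℝ} {N m : ℝ} (hN : 1 ≤ N) (hf0 : ∀ i, 0 ≤ f i)
    (hf : Summable f) (hm0 : 0 ≤ m)
    (hm : ∀ i : ℕ, N ≤ (i : ℝ) + 1 → (i : ℝ) + 1 ≤ 3 * N → m ≤ f i) :
    N * m ≤ ∑' i, f i := by
  set K := ⌈N⌉₊
  have hNK : N ≤ K := Nat.le_ceil N
  have hKN : (K : ℝ) < N + 1 := Nat.ceil_lt_add_one (by linarith)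
  have hK : 1 ≤ K := by exact_mod_cast hN.trans hNK
  calc N * m ≤ K * m := by gcongr
    _ = ∑ _i ∈ Ico (K - 1) (2 * K - 1), m := by
        rw [sum_const, Nat.card_Ico, nsmul_eq_mul]; congr 2; omega
    _ ≤ ∑ i ∈ Ico (K - 1) (2 * K - 1), f i := by
        refine sum_le_sum fun i hi => ?_
        obtain ⟨hlo, hhi⟩ := Finset.mem_Ico.mp hi
        have hlo' : (K : ℝ) ≤ i + 1 := by exact_mod_cast (by omega : K ≤ i + 1)
        have hhi' : (i : ℝ) + 2 ≤ 2 * K := by exact_mod_cast (by omega : i + 2 ≤ 2 * K)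
        exact hm i (by linarith) (by linarith)
    _ ≤ ∑' i, f i := hf.sum_le_tsum _ fun i _ => hf0 i

lemma mul_div_one_add_sq_le {w x : ℝ} (hw : 0 ≤ w) (hx : 0 ≤ x) :
    w * x / (1 + x) ^ 2 ≤ w / (1 + x) := by
  rw [div_le_div_iff₀ (by positivity) (by positivity)]
  nlinarith [mul_nonneg hw hx]

lemma rpow_div_mem_Icc {N u β : ℝ} (hN : 0 < N) (hβ : 0 ≤ β) (hNu : N ≤ u) (hu : u ≤ 3 * N) :
    (1 / 3) ^ β ≤ (N / u) ^ β ∧ (N / u) ^ β ≤ 1 := by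
  have hu0 : 0 < u := hN.trans_le hNu
  refine ⟨Real.rpow_le_rpow (by norm_num) ?_ hβ, Real.rpow_le_one (by positivity) ?_ hβ⟩
  · rw [le_div_iff₀ hu0]; linarith
  · rwa [div_le_one hu0]

lemma mul_rpow_three_mul {N r : ℝ} (hN : 0 < N) :
    N * (3 * N) ^ (-1 - r) = 3 ^ (-1 - r) * N ^ (-r) := by
  rw [Real.mul_rpow (by norm_num) hN.le, show -1 - r = -r - 1 by ring, Real.rpow_sub_one hN.ne']
  field_simp

lemma exists_one_le_rpow_eq {T β : ℝ} (hT : 1 ≤ T) (hβ : 0 < β) :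
    ∃ N : ℝ, 1 ≤ N ∧ N ^ β = T ∧ ∀ r : ℝ, T ^ (-(r / β)) = N ^ (-r) := by
  refine ⟨T ^ (1 / β), Real.one_le_rpow hT (by positivity), ?_, fun r => ?_⟩
  · rw [← Real.rpow_mul (by linarith), one_div_mul_cancel hβ.ne', Real.rpow_one]
  · rw [← Real.rpow_mul (by linarith)]
    congr 1
    field_simp

lemma exists_pos_le_bounds {ι : Type*} {l : Filter ι} {f g : ι → ℝ} {c C : ℝ} (hc : 0 < c)
    (hg : ∀ i, 0 ≤ g i) (h : ∀ᶠ i in l, c * g i ≤ f i ∧ f i ≤ C * g i) :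
    ∃ c C : ℝ, 0 < c ∧ c ≤ C ∧ ∀ᶠ i in l, c * g i ≤ f i ∧ f i ≤ C * g i :=
  ⟨c, max c C, hc, le_max_left c C, h.mono fun i hi =>
    ⟨hi.1, hi.2.trans (mul_le_mul_of_nonneg_right (le_max_right c C) (hg i))⟩⟩

section

variable {α p : ℝ}

lemma rpow_div_one_add_le {c N u y : ℝ} (hc : 0 < c) (hN : 0 < N) (hu : 0 < u)
    (hy : c * (N / u) ^ (1 + 2 * α + 2 * p) ≤ y) :
    u ^ (-1 - 2 * α) / (1 + y) ≤ u ^ (2 * p) / (c * N ^ (1 + 2 * α + 2 * p)) := by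
  have hpos : 0 < c * (N / u) ^ (1 + 2 * α + 2 * p) := by positivity
  calc u ^ (-1 - 2 * α) / (1 + y) ≤ u ^ (-1 - 2 * α) / (c * (N / u) ^ (1 + 2 * α + 2 * p)) :=
        div_le_div_of_nonneg_left (by positivity) hpos (by linarith)
    _ = u ^ (-1 - 2 * α) * u ^ (1 + 2 * α + 2 * p) / (c * N ^ (1 + 2 * α + 2 * p)) := by
        rw [Real.div_rpow hN.le hu.le]
        field_simp
    _ = u ^ (2 * p) / (c * N ^ (1 + 2 * α + 2 * p)) := by
        rw [← Real.rpow_add hu]; ring_nf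

lemma summable_rpow_div_one_add (hα : 0 < α) {x : ℕ → ℝ} (hx0 : ∀ i, 0 ≤ x i) :
    Summable fun i : ℕ => ((i : ℝ) + 1) ^ (-1 - 2 * α) / (1 + x i) :=
  .of_nonneg_of_le (fun i => div_nonneg (by positivity) (by linarith [hx0 i]))
    (fun i => div_le_self (by positivity) (by linarith [hx0 i])) (summable_rpow_succ (by linarith))

lemma sum_range_ceil_rpow_div_one_add_le (hp : 0 ≤ p) {c N : ℝ} (hc : 0 < c) (hN : 1 ≤ N)
    {x : ℕ → ℝ} (hx : ∀ i : ℕ, c * (N / ((i : ℝ) + 1)) ^ (1 + 2 * α + 2 * p) ≤ x i) :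
    ∑ i ∈ range ⌈N⌉₊, ((i : ℝ) + 1) ^ (-1 - 2 * α) / (1 + x i)
      ≤ 2 ^ (1 + 2 * p) / c * N ^ (-(2 * α)) := by
  set K := ⌈N⌉₊
  have hN0 : 0 < N := by linarith
  have hK : (0 : ℝ) < K := Nat.cast_pos.mpr (Nat.ceil_pos.mpr hN0)
  have hK2N : (K : ℝ) ≤ 2 * N := by linarith [Nat.ceil_lt_add_one hN0.le]
  calc ∑ i ∈ range K, ((i : ℝ) + 1) ^ (-1 - 2 * α) / (1 + x i)
        ≤ ∑ _i ∈ range K, (K : ℝ) ^ (2 * p) / (c * N ^ (1 + 2 * α + 2 * p)) := by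
        refine sum_le_sum fun i hi =>
          (rpow_div_one_add_le hc hN0 (by positivity) (hx i)).trans ?_
        have : (i : ℝ) + 1 ≤ K := by exact_mod_cast Finset.mem_range.mp hi
        gcongr
    _ = (K : ℝ) ^ (1 + 2 * p) / (c * N ^ (1 + 2 * α + 2 * p)) := by
        rw [sum_const, card_range, nsmul_eq_mul, Real.rpow_add hK 1, Real.rpow_one]
        ring
    _ ≤ (2 * N) ^ (1 + 2 * p) / (c * N ^ (1 + 2 * α + 2 * p)) := by gcongr
    _ = 2 ^ (1 + 2 * p) / c * N ^ (-(2 * α)) := by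
        rw [Real.mul_rpow (by norm_num) hN0.le,
          show -(2 * α) = (1 + 2 * p) - (1 + 2 * α + 2 * p) by ring, Real.rpow_sub hN0]
        ring

lemma tsum_rpow_div_one_add_le (hα : 0 < α) (hp : 0 ≤ p) {c N : ℝ} (hc : 0 < c) (hN : 1 ≤ N)
    {x : ℕ → ℝ} (hx : ∀ i : ℕ, c * (N / ((i : ℝ) + 1)) ^ (1 + 2 * α + 2 * p) ≤ x i) :
    ∑' i : ℕ, ((i : ℝ) + 1) ^ (-1 - 2 * α) / (1 + x i)
      ≤ (2 ^ (1 + 2 * p) / c + 1 / (2 * α)) * N ^ (-(2 * α)) := by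
  have hx0 : ∀ i, 0 ≤ x i := fun i => le_trans (by positivity) (hx i)
  have hg := summable_rpow_div_one_add hα hx0
  have tail : ∑' i : ℕ, (((i + ⌈N⌉₊ : ℕ) : ℝ) + 1) ^ (-1 - 2 * α) / (1 + x (i + ⌈N⌉₊))
      ≤ 1 / (2 * α) * N ^ (-(2 * α)) := by
    calc _ ≤ ∑' i : ℕ, (((i + ⌈N⌉₊ : ℕ) : ℝ) + 1) ^ (-1 - 2 * α) :=
          Summable.tsum_le_tsum
            (fun i => div_le_self (by positivity) (by linarith [hx0 (i + ⌈N⌉₊)]))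
            ((summable_nat_add_iff _).mpr hg)
            ((summable_nat_add_iff _).mpr (summable_rpow_succ (by linarith)))
      _ ≤ N ^ (-(2 * α)) / (2 * α) := tsum_rpow_nat_add_ceil_le (by linarith) (by linarith)
      _ = 1 / (2 * α) * N ^ (-(2 * α)) := by ring
  rw [← hg.sum_add_tsum_nat_add ⌈N⌉₊]
  linarith [sum_range_ceil_rpow_div_one_add_le hp hc hN hx]

lemma le_tsum_rpow_div_one_add (hα : 0 < α) {β b N : ℝ} (hβ : 0 ≤ β) (hb : 0 ≤ b) (hN : 1 ≤ N)
    {x : ℕ → ℝ} (hx0 : ∀ i, 0 ≤ x i) (hx : ∀ i : ℕ, x i ≤ b * (N / ((i : ℝ) + 1)) ^ β) :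
    3 ^ (-1 - 2 * α) / (1 + b) * N ^ (-(2 * α))
      ≤ ∑' i : ℕ, ((i : ℝ) + 1) ^ (-1 - 2 * α) / (1 + x i) := by
  have hN0 : 0 < N := by linarith
  calc 3 ^ (-1 - 2 * α) / (1 + b) * N ^ (-(2 * α))
        = N * ((3 * N) ^ (-1 - 2 * α) / (1 + b)) := by
        linear_combination (1 + b)⁻¹ * (mul_rpow_three_mul (r := 2 * α) hN0).symm
    _ ≤ _ := mul_le_tsum_of_le_on_window hN
      (fun i => div_nonneg (by positivity) (by linarith [hx0 i]))
      (summable_rpow_div_one_add hα hx0) (div_nonneg (by positivity) (by linarith))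
      fun i h1 h3 => by
        have hxb : x i ≤ b :=
          (hx i).trans (mul_le_of_le_one_right hb (rpow_div_mem_Icc hN0 hβ h1 h3).2)
        exact div_le_div₀ (by positivity)
          (Real.rpow_le_rpow_of_nonpos (by positivity) h3 (by linarith)) (by linarith [hx0 i])
          (by linarith)

lemma le_tsum_rpow_mul_div_one_add_sq (hα : 0 < α) {β a b N : ℝ} (hβ : 0 ≤ β) (ha : 0 ≤ a)
    (hN : 1 ≤ N) {x : ℕ → ℝ}
    (hx : ∀ i : ℕ, a * (N / ((i : ℝ) + 1)) ^ β ≤ x i ∧ x i ≤ b * (N / ((i : ℝ) + 1)) ^ β) :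
    3 ^ (-1 - 2 * α) * (a * (1 / 3) ^ β) / (1 + b) ^ 2 * N ^ (-(2 * α))
      ≤ ∑' i : ℕ, ((i : ℝ) + 1) ^ (-1 - 2 * α) * x i / (1 + x i) ^ 2 := by
  have hN0 : 0 < N := by linarith
  have hx0 : ∀ i, 0 ≤ x i := fun i => le_trans (by positivity) (hx i).1
  have hab : a ≤ b := by
    have h := (hx 0).1.trans (hx 0).2
    exact le_of_mul_le_mul_right h (by positivity)
  have hb : 0 < 1 + b := by linarith
  have hβ' : (0 : ℝ) ≤ (1 / 3) ^ β := by positivity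
  calc 3 ^ (-1 - 2 * α) * (a * (1 / 3) ^ β) / (1 + b) ^ 2 * N ^ (-(2 * α))
        = N * ((3 * N) ^ (-1 - 2 * α) * (a * (1 / 3) ^ β) / (1 + b) ^ 2) := by
        linear_combination (a * (1 / 3) ^ β / (1 + b) ^ 2) *
          (mul_rpow_three_mul (r := 2 * α) hN0).symm
    _ ≤ _ := mul_le_tsum_of_le_on_window hN (fun i => by have := hx0 i; positivity)
      (.of_nonneg_of_le (fun i => by have := hx0 i; positivity)
        (fun i => mul_div_one_add_sq_le (by positivity) (hx0 i))
        (summable_rpow_div_one_add hα hx0))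
      (div_nonneg (mul_nonneg (by positivity) (mul_nonneg ha hβ')) (by positivity))
      fun i h1 h3 => by
        obtain ⟨hlo, hhi⟩ := rpow_div_mem_Icc hN0 hβ h1 h3
        have hxa : a * (1 / 3) ^ β ≤ x i := (mul_le_mul_of_nonneg_left hlo ha).trans (hx i).1
        have hxb : x i ≤ b := (hx i).2.trans (mul_le_of_le_one_right (ha.trans hab) hhi)
        exact div_le_div₀ (by have := hx0 i; positivity)
          (mul_le_mul (Real.rpow_le_rpow_of_nonpos (by positivity) h3 (by linarith)) hxa
            (mul_nonneg ha hβ') (by positivity)) (by have := hx0 i; positivity)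
          (pow_le_pow_left₀ (by linarith [hx0 i]) (by linarith) 2)

lemma mul_rpow_mul_sq_mem_Icc {N u k c₁ c₂ : ℝ} (hN : 0 ≤ N) (hu : 0 < u) (hc₁ : 0 ≤ c₁)
    (hk : c₁ * u ^ (-p) ≤ k ∧ k ≤ c₂ * u ^ (-p)) :
    c₁ ^ 2 * (N / u) ^ (1 + 2 * α + 2 * p)
        ≤ N ^ (1 + 2 * α + 2 * p) * u ^ (-1 - 2 * α) * k ^ 2 ∧
      N ^ (1 + 2 * α + 2 * p) * u ^ (-1 - 2 * α) * k ^ 2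
        ≤ c₂ ^ 2 * (N / u) ^ (1 + 2 * α + 2 * p) := by
  have hsplit : (N / u) ^ (1 + 2 * α + 2 * p)
      = N ^ (1 + 2 * α + 2 * p) * u ^ (-1 - 2 * α) * (u ^ (-p)) ^ 2 := by
    rw [Real.div_rpow hN hu.le, div_eq_mul_inv, ← Real.rpow_neg hu.le, mul_assoc, sq,
      ← Real.rpow_add hu, ← Real.rpow_add hu]
    ring_nf
  have hlo : 0 ≤ c₁ * u ^ (-p) := by positivity
  have hA : 0 ≤ N ^ (1 + 2 * α + 2 * p) * u ^ (-1 - 2 * α) := by positivity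
  rw [hsplit]
  constructor
  · calc c₁ ^ 2 * (N ^ (1 + 2 * α + 2 * p) * u ^ (-1 - 2 * α) * (u ^ (-p)) ^ 2)
        = N ^ (1 + 2 * α + 2 * p) * u ^ (-1 - 2 * α) * (c₁ * u ^ (-p)) ^ 2 := by ring
      _ ≤ _ := mul_le_mul_of_nonneg_left (pow_le_pow_left₀ hlo hk.1 2) hA
  · calc N ^ (1 + 2 * α + 2 * p) * u ^ (-1 - 2 * α) * k ^ 2
        ≤ N ^ (1 + 2 * α + 2 * p) * u ^ (-1 - 2 * α) * (c₂ * u ^ (-p)) ^ 2 :=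
          mul_le_mul_of_nonneg_left (pow_le_pow_left₀ (hlo.trans hk.1) hk.2 2) hA
      _ = _ := by ring

lemma posterior_sums_bounds (hα : 0 < α) (hp : 0 ≤ p) {a b s t N : ℝ} (ha : 0 < a) (hs : 0 ≤ s)
    (hN : 1 ≤ N) {lam κ : ℕ → ℝ} (hlam : ∀ i, lam i = s * ((i : ℝ) + 1) ^ (-1 - 2 * α))
    (hx : ∀ i : ℕ, a * (N / ((i : ℝ) + 1)) ^ (1 + 2 * α + 2 * p) ≤ t * lam i * κ i ^ 2 ∧
      t * lam i * κ i ^ 2 ≤ b * (N / ((i : ℝ) + 1)) ^ (1 + 2 * α + 2 * p)) :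
    (3 ^ (-1 - 2 * α) / (1 + b) * (s * N ^ (-(2 * α)))
        ≤ ∑' i, lam i / (1 + t * lam i * κ i ^ 2) ∧
      ∑' i, lam i / (1 + t * lam i * κ i ^ 2)
        ≤ (2 ^ (1 + 2 * p) / a + 1 / (2 * α)) * (s * N ^ (-(2 * α)))) ∧
    (3 ^ (-1 - 2 * α) * (a * (1 / 3) ^ (1 + 2 * α + 2 * p)) / (1 + b) ^ 2
          * (s * N ^ (-(2 * α))) ≤ ∑' i, t * lam i ^ 2 * κ i ^ 2 / (1 + t * lam i * κ i ^ 2) ^ 2 ∧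
      ∑' i, t * lam i ^ 2 * κ i ^ 2 / (1 + t * lam i * κ i ^ 2) ^ 2
        ≤ (2 ^ (1 + 2 * p) / a + 1 / (2 * α)) * (s * N ^ (-(2 * α)))) := by
  set x : ℕ → ℝ := fun i => t * lam i * κ i ^ 2
  have hx0 : ∀ i, 0 ≤ x i := fun i => le_trans (by positivity) (hx i).1
  have hb : 0 ≤ b := by
    have h := (hx 0).1.trans (hx 0).2
    exact ha.le.trans (le_of_mul_le_mul_right h (by positivity))
  have hS₁ : ∑' i, lam i / (1 + x i)
      = s * ∑' i : ℕ, ((i : ℝ) + 1) ^ (-1 - 2 * α) / (1 + x i) := by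
    rw [← tsum_mul_left]
    exact tsum_congr fun i => by rw [hlam i, mul_div_assoc]
  have hS₂ : ∑' i, t * lam i ^ 2 * κ i ^ 2 / (1 + x i) ^ 2
      = s * ∑' i : ℕ, ((i : ℝ) + 1) ^ (-1 - 2 * α) * x i / (1 + x i) ^ 2 := by
    rw [← tsum_mul_left]
    exact tsum_congr fun i => by simp only [x]; rw [hlam i]; ring
  have hS₂₁ : ∑' i : ℕ, ((i : ℝ) + 1) ^ (-1 - 2 * α) * x i / (1 + x i) ^ 2
      ≤ ∑' i : ℕ, ((i : ℝ) + 1) ^ (-1 - 2 * α) / (1 + x i) :=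
    Summable.tsum_le_tsum (fun i => mul_div_one_add_sq_le (by positivity) (hx0 i))
      (.of_nonneg_of_le (fun i => by have := hx0 i; positivity)
        (fun i => mul_div_one_add_sq_le (by positivity) (hx0 i))
        (summable_rpow_div_one_add hα hx0))
      (summable_rpow_div_one_add hα hx0)
  have hupper := tsum_rpow_div_one_add_le hα hp ha hN fun i => (hx i).1
  have hlower₁ := le_tsum_rpow_div_one_add hα (by positivity) hb hN hx0 fun i => (hx i).2
  have hlower₂ := le_tsum_rpow_mul_div_one_add_sq hα (by positivity) ha.le hN hx
  rw [hS₁, hS₂]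
  refine ⟨⟨?_, ?_⟩, ⟨?_, ?_⟩⟩ <;> rw [mul_left_comm] <;> gcongr
  exact hS₂₁.trans hupper

end

theorem stmt10_general (p α : ℝ) (hp : 0 ≤ p) (hα : 0 < α)
    (τ : ℕ → ℝ)
    (hnτ : Tendsto (fun n : ℕ => (n : ℝ) * (τ n) ^ 2) atTop atTop)
    (κ : ℕ → ℝ) (c₁ c₂ : ℝ) (hc₁ : 0 < c₁)
    (hκ : ∀ i : ℕ, c₁ * ((i : ℝ) + 1) ^ (-p) ≤ κ i ∧ κ i ≤ c₂ * ((i : ℝ) + 1) ^ (-p)) :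
    let lam : ℕ → ℕ → ℝ := fun n i => (τ n) ^ 2 * ((i : ℝ) + 1) ^ (-1 - 2 * α)
    let rate : ℕ → ℝ := fun n =>
      (τ n) ^ 2 * ((n : ℝ) * (τ n) ^ 2) ^ (-(2 * α / (1 + 2 * α + 2 * p)))
    (∃ c C : ℝ, 0 < c ∧ c ≤ C ∧ ∀ᶠ n : ℕ in atTop,
      c * rate n ≤ (∑' i : ℕ, lam n i / (1 + (n : ℝ) * lam n i * (κ i) ^ 2)) ∧
      (∑' i : ℕ, lam n i / (1 + (n : ℝ) * lam n i * (κ i) ^ 2)) ≤ C * rate n) ∧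
    (∃ c C : ℝ, 0 < c ∧ c ≤ C ∧ ∀ᶠ n : ℕ in atTop,
      c * rate n ≤ (∑' i : ℕ, (n : ℝ) * (lam n i) ^ 2 * (κ i) ^ 2 /
          (1 + (n : ℝ) * lam n i * (κ i) ^ 2) ^ 2) ∧
      (∑' i : ℕ, (n : ℝ) * (lam n i) ^ 2 * (κ i) ^ 2 /
          (1 + (n : ℝ) * lam n i * (κ i) ^ 2) ^ 2) ≤ C * rate n) := by
  intro lam rate
  have hrate : ∀ n, 0 ≤ rate n := fun n => by positivity
  have hdim : ∀ᶠ n : ℕ in atTop, ∃ N : ℝ, 1 ≤ N ∧ rate n = τ n ^ 2 * N ^ (-(2 * α)) ∧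
      ∀ i : ℕ, c₁ ^ 2 * (N / ((i : ℝ) + 1)) ^ (1 + 2 * α + 2 * p) ≤ n * lam n i * κ i ^ 2 ∧
        n * lam n i * κ i ^ 2 ≤ c₂ ^ 2 * (N / ((i : ℝ) + 1)) ^ (1 + 2 * α + 2 * p) := by
    filter_upwards [hnτ.eventually_ge_atTop 1] with n hT
    obtain ⟨N, hN, hNβ, hNr⟩ :=
      exists_one_le_rpow_eq hT (by positivity : 0 < 1 + 2 * α + 2 * p)
    refine ⟨N, hN, by simp only [rate, hNr], fun i => ?_⟩
    rw [show (n : ℝ) * lam n i * κ i ^ 2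
        = n * τ n ^ 2 * ((i : ℝ) + 1) ^ (-1 - 2 * α) * κ i ^ 2 by simp only [lam]; ring, ← hNβ]
    exact mul_rpow_mul_sq_mem_Icc (by linarith) (by positivity) hc₁.le (hκ i)
  have hbounds := hdim.mono fun n ⟨N, hN, hrate_eq, hx⟩ => hrate_eq ▸
    posterior_sums_bounds hα hp (pow_pos hc₁ 2) (sq_nonneg (τ n)) hN (fun i => rfl) hx
  exact ⟨exists_pos_le_bounds (by positivity) hrate (hbounds.mono fun n h => h.1),
    exists_pos_le_bounds (by positivity) hrate (hbounds.mono fun n h => h.2)⟩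

/-- Trace of the posterior covariance and total variance of the posterior mean:
both `∑ λᵢ/(1+nλᵢκᵢ²)` and `∑ nλᵢ²κᵢ²/(1+nλᵢκᵢ²)²` are of exact order
`τ_n² (nτ_n²)^{-2α/(1+2α+2p)}`. -/
theorem stmt10 (p α : ℝ) (hp : 0 ≤ p) (hα : 0 < α)
    (τ : ℕ → ℝ) (hτpos : ∀ n, 0 < τ n)
    (hnτ : Tendsto (fun n : ℕ => (n : ℝ) * (τ n) ^ 2) atTop atTop)
    (κ : ℕ → ℝ) (c₁ c₂ : ℝ) (hc₁ : 0 < c₁)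
    (hκ : ∀ i : ℕ, c₁ * ((i : ℝ) + 1) ^ (-p) ≤ κ i ∧ κ i ≤ c₂ * ((i : ℝ) + 1) ^ (-p)) :
    let lam : ℕ → ℕ → ℝ := fun n i => (τ n) ^ 2 * ((i : ℝ) + 1) ^ (-1 - 2 * α)
    let rate : ℕ → ℝ := fun n =>
      (τ n) ^ 2 * ((n : ℝ) * (τ n) ^ 2) ^ (-(2 * α / (1 + 2 * α + 2 * p)))
    (∃ c C : ℝ, 0 < c ∧ c ≤ C ∧ ∀ᶠ n : ℕ in atTop,
      c * rate n ≤ (∑' i : ℕ, lam n i / (1 + (n : ℝ) * lam n i * (κ i) ^ 2)) ∧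
      (∑' i : ℕ, lam n i / (1 + (n : ℝ) * lam n i * (κ i) ^ 2)) ≤ C * rate n) ∧
    (∃ c C : ℝ, 0 < c ∧ c ≤ C ∧ ∀ᶠ n : ℕ in atTop,
      c * rate n ≤ (∑' i : ℕ, (n : ℝ) * (lam n i) ^ 2 * (κ i) ^ 2 /
          (1 + (n : ℝ) * lam n i * (κ i) ^ 2) ^ 2) ∧
      (∑' i : ℕ, (n : ℝ) * (lam n i) ^ 2 * (κ i) ^ 2 /
          (1 + (n : ℝ) * lam n i * (κ i) ^ 2) ^ 2) ≤ C * rate n) :=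
  stmt10_general p α hp hα τ hnτ κ c₁ c₂ hc₁ hκ
end

section
/- Under the Bayesian sequence model with κ_i ≍ i^{-p} and λ_i = τ_n² i^{-1-2α}, the per-coordinate difference s_{i,n} − t_{i,n} = λ_i/(1+nλ_iκ_i²)², where s_{i,n} = λ_i/(1+nλ_iκ_i²) and t_{i,n} = nλ_i²κ_i²/(1+nλ_iκ_i²)², satisfies Σ_i (s_{i,n} − t_{i,n}) ≍ τ_n²(nτ_n²)^{-2α/(1+2α+2p)}, while Σ_i s_{i,n}² ≍ Σ_i t_{i,n}² ≍ τ_n⁴(nτ_n²)^{-(1+4α)/(1+2α+2p)}; consequently the standard deviations of U_n = Σ_i s_{i,n} Z_i² and V_n = Σ_i t_{i,n} Z_i² (Z_i iid standard normal) are of strictly smaller order than E(U_n − V_n). -/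
open Filter Topology

/-!
Write `d_i = nλ_iκ_i² ≍ nτ_n² (i+1)^{-β}` with `β = 1 + 2α + 2p`. Up to the factors `τ_n²`,
`τ_n⁴`, the three sums are `∑ (i+1)^{-r} φ(d_i)` with `r = 1 + 2α` or `r = 2 + 4α` and
`φ(d) = (1+d)^{-2}` or `(d/(1+d)²)²`. The index `L = (nτ_n²)^{1/β}` at which `d_i` crosses `1`
governs everything: below `L` the term is at most `L^{-r}` (because `(1+d)² ≥ (L/(i+1))^r` when
`r ≤ 2β`), above `L` it is at most `(i+1)^{-r}`, so the sum is `≲ L^{1-r}`;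
conversely each of the `≍ L` indices with `L ≤ i+1 ≤ 4L` has `d_i ≍ 1` and contributes `≳ L^{-r}`.
This gives both rates, and then `√rate₂ / rate₁ = (nτ_n²)^{-1/(2β)} → 0`.
-/

lemma sum_range_rpow_neg_le {r x : ℝ} (hr : 1 < r) (hx : 0 < x) (n : ℕ) :
    ∑ j ∈ Finset.range n, (x + (j + 1 : ℕ)) ^ (-r) ≤ x ^ (1 - r) / (r - 1) := by
  have hanti : AntitoneOn (fun t : ℝ => t ^ (-r)) (Set.Icc x (x + n)) := fun s hs t _ hst =>
    Real.rpow_le_rpow_of_nonpos (hx.trans_le hs.1) hst (by linarith)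
  have hzero : (0 : ℝ) ∉ Set.uIcc x (x + n) := by
    rw [Set.uIcc_of_le (by simp)]
    exact fun h => hx.not_ge h.1
  calc ∑ j ∈ Finset.range n, (x + (j + 1 : ℕ)) ^ (-r)
      ≤ ∫ t in x..x + n, t ^ (-r) := hanti.sum_le_integral
    _ = (x ^ (1 - r) - (x + n) ^ (1 - r)) / (r - 1) := by
      rw [integral_rpow (Or.inr ⟨by linarith, hzero⟩), neg_add_eq_sub,
        ← neg_div_neg_eq, neg_sub, neg_sub]
    _ ≤ x ^ (1 - r) / (r - 1) := by
      gcongr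
      exact sub_le_self _ (by positivity)

lemma summable_rpow_neg_nat_add_one {r : ℝ} (hr : 1 < r) :
    Summable (fun i : ℕ => ((i : ℝ) + 1) ^ (-r)) := by
  simpa using (summable_nat_add_iff 1).mpr (Real.summable_nat_rpow.mpr (by linarith : -r < -1))

lemma tsum_le_of_le_rpow_neg {r L : ℝ} (hr : 1 < r) (hL : 1 ≤ L) {g : ℕ → ℝ}
    (hg0 : ∀ i, 0 ≤ g i) (hgk : ∀ i, g i ≤ ((i : ℝ) + 1) ^ (-r)) (hgL : ∀ i, g i ≤ L ^ (-r)) :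
    ∑' i, g i ≤ (2 + 1 / (r - 1)) * L ^ (1 - r) := by
  set M := ⌈L⌉₊
  have hLM : L ≤ M := Nat.le_ceil L
  have hML : (M : ℝ) < L + 1 := Nat.ceil_lt_add_one (by linarith)
  have hgs : Summable g := (summable_rpow_neg_nat_add_one hr).of_nonneg_of_le hg0 hgk
  have hLr : L * L ^ (-r) = L ^ (1 - r) := by
    rw [sub_eq_add_neg, Real.rpow_add (by linarith), Real.rpow_one]
  have hhead : ∑ i ∈ Finset.range M, g i ≤ 2 * L ^ (1 - r) := calc
    _ ≤ M * L ^ (-r) := by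
      simpa using Finset.sum_le_card_nsmul (Finset.range M) g _ fun i _ => hgL i
    _ ≤ 2 * L * L ^ (-r) := by gcongr; linarith
    _ = 2 * L ^ (1 - r) := by rw [mul_assoc, hLr]
  have hshift (j : ℕ) : g (j + M) ≤ ((M : ℝ) + (j + 1 : ℕ)) ^ (-r) := by
    have := hgk (j + M)
    push_cast at this ⊢
    rwa [add_right_comm, add_comm ((j : ℝ) + 1)] at this
  have htail : ∑' j, g (j + M) ≤ L ^ (1 - r) / (r - 1) := calc
    _ ≤ (M : ℝ) ^ (1 - r) / (r - 1) := Real.tsum_le_of_sum_range_le (fun j => hg0 _) fun n =>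
      (Finset.sum_le_sum fun j _ => hshift j).trans (sum_range_rpow_neg_le hr (by linarith) n)
    _ ≤ L ^ (1 - r) / (r - 1) := div_le_div_of_nonneg_right
      (Real.rpow_le_rpow_of_nonpos (by linarith) hLM (by linarith)) (by linarith)
  rw [← hgs.sum_add_tsum_nat_add M]
  linarith [show (2 + 1 / (r - 1)) * L ^ (1 - r) = 2 * L ^ (1 - r) + L ^ (1 - r) / (r - 1) by ring]

lemma le_tsum_of_le_on_window {r L c : ℝ} (hr : 0 ≤ r) (hL : 1 ≤ L) (hc : 0 ≤ c) {g : ℕ → ℝ}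
    (hg0 : ∀ i, 0 ≤ g i) (hgs : Summable g)
    (hwin : ∀ i : ℕ, L ≤ (i : ℝ) + 1 → (i : ℝ) + 1 ≤ 4 * L → c * ((i : ℝ) + 1) ^ (-r) ≤ g i) :
    c * 4 ^ (-r) * L ^ (1 - r) ≤ ∑' i, g i := by
  set M := ⌈L⌉₊
  have hLM : L ≤ M := Nat.le_ceil L
  have hML : (M : ℝ) < L + 1 := Nat.ceil_lt_add_one (by linarith)
  have hterm : ∀ i ∈ Finset.Ico M (2 * M), c * 4 ^ (-r) * L ^ (-r) ≤ g i := by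
    intro i hi
    obtain ⟨h₁, h₂⟩ := Finset.mem_Ico.mp hi
    have hk₁ : L ≤ (i : ℝ) + 1 := by
      have : (M : ℝ) ≤ i := by exact_mod_cast h₁
      linarith
    have hk₂ : (i : ℝ) + 1 ≤ 4 * L := by
      have : (i : ℝ) + 1 ≤ 2 * M := by exact_mod_cast h₂
      linarith
    calc c * 4 ^ (-r) * L ^ (-r) = c * (4 * L) ^ (-r) := by
          rw [Real.mul_rpow (by norm_num) (by linarith : (0 : ℝ) ≤ L), mul_assoc]
      _ ≤ c * ((i : ℝ) + 1) ^ (-r) :=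
          mul_le_mul_of_nonneg_left
            (Real.rpow_le_rpow_of_nonpos (by positivity) hk₂ (by linarith)) hc
      _ ≤ g i := hwin i hk₁ hk₂
  calc c * 4 ^ (-r) * L ^ (1 - r) = L * (c * 4 ^ (-r) * L ^ (-r)) := by
        rw [sub_eq_add_neg, Real.rpow_add (by linarith), Real.rpow_one]
        ring
    _ ≤ M * (c * 4 ^ (-r) * L ^ (-r)) := by gcongr
    _ ≤ ∑ i ∈ Finset.Ico M (2 * M), g i := by
        simpa [two_mul] using Finset.card_nsmul_le_sum _ _ _ hterm
    _ ≤ ∑' i, g i := hgs.sum_le_tsum _ fun i _ => hg0 i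

lemma rpow_inv_div_rpow {m k β : ℝ} (hm : 0 ≤ m) (hk : 0 < k) (hβ : β ≠ 0) :
    (m ^ β⁻¹ / k) ^ β = m * k ^ (-β) := by
  rw [Real.div_rpow (by positivity) hk.le, Real.rpow_inv_rpow hm hβ, Real.rpow_neg hk.le,
    div_eq_mul_inv]

lemma rpow_inv_rpow_one_sub {m r β : ℝ} (hm : 0 ≤ m) : (m ^ β⁻¹) ^ (1 - r) = m ^ ((1 - r) / β) := by
  rw [← Real.rpow_mul hm, inv_mul_eq_div]

lemma rpow_le_one_add_sq {x d r β : ℝ} (hx : 0 ≤ x) (hr : 0 ≤ r) (hrβ : r ≤ 2 * β)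
    (hd : x ^ β ≤ d) : x ^ r ≤ (1 + d) ^ 2 := by
  have hxβ : 0 ≤ x ^ β := Real.rpow_nonneg hx β
  rcases le_total x 1 with h | h
  · nlinarith [Real.rpow_le_one hx h hr]
  · calc x ^ r ≤ x ^ (2 * β) := Real.rpow_le_rpow_of_exponent_le h hrβ
      _ = (x ^ β) ^ 2 := by rw [mul_comm, Real.rpow_mul hx, Real.rpow_two]
      _ ≤ (1 + d) ^ 2 := by gcongr; linarith

lemma tsum_rpow_neg_div_one_add_sq_le {r β m : ℝ} (hr : 1 < r) (hrβ : r ≤ 2 * β) (hm : 1 ≤ m)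
    {d : ℕ → ℝ} (hd : ∀ i : ℕ, m * ((i : ℝ) + 1) ^ (-β) ≤ d i) :
    ∑' i : ℕ, ((i : ℝ) + 1) ^ (-r) / (1 + d i) ^ 2 ≤ (2 + 1 / (r - 1)) * m ^ ((1 - r) / β) := by
  have hβ : 0 < β := by linarith
  set L := m ^ β⁻¹
  have hL : 1 ≤ L := Real.one_le_rpow hm (by positivity)
  have hd' (i : ℕ) : (L / ((i : ℝ) + 1)) ^ β ≤ d i := by
    rw [rpow_inv_div_rpow (by linarith) (by positivity) hβ.ne']
    exact hd i
  have hd0 (i : ℕ) : 0 ≤ d i := (Real.rpow_nonneg (by positivity) β).trans (hd' i)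
  rw [← rpow_inv_rpow_one_sub (by linarith)]
  refine tsum_le_of_le_rpow_neg hr hL (fun i => by positivity)
    (fun i => div_le_self (by positivity) (by nlinarith [hd0 i])) (fun i => ?_)
  have hk : (0 : ℝ) < (i : ℝ) + 1 := by positivity
  calc ((i : ℝ) + 1) ^ (-r) / (1 + d i) ^ 2 ≤ ((i : ℝ) + 1) ^ (-r) / (L / ((i : ℝ) + 1)) ^ r :=
        div_le_div_of_nonneg_left (by positivity) (by positivity)
          (rpow_le_one_add_sq (by positivity) (by linarith) hrβ (hd' i))
    _ = L ^ (-r) := by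
        rw [Real.div_rpow (by positivity) hk.le, Real.rpow_neg hk.le, Real.rpow_neg (by positivity)]
        field_simp

lemma mul_rpow_neg_le_one {m k β : ℝ} (hm : 0 ≤ m) (hβ : 0 < β) (hk : m ^ β⁻¹ ≤ k) (hk0 : 0 < k) :
    m * k ^ (-β) ≤ 1 := by
  rw [← rpow_inv_div_rpow hm hk0 hβ.ne']
  exact Real.rpow_le_one (by positivity) ((div_le_one hk0).mpr hk) hβ.le

lemma summable_rpow_neg_div_one_add_sq {r : ℝ} (hr : 1 < r) {d : ℕ → ℝ} (hd : ∀ i, 0 ≤ d i) :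
    Summable fun i : ℕ => ((i : ℝ) + 1) ^ (-r) / (1 + d i) ^ 2 :=
  (summable_rpow_neg_nat_add_one hr).of_nonneg_of_le (fun i => by positivity)
    fun i => div_le_self (by positivity) (by nlinarith [hd i])

lemma le_tsum_rpow_neg_div_one_add_sq {r β m : ℝ} (hr : 1 < r) (hβ : 0 < β) (hm : 1 ≤ m)
    {d : ℕ → ℝ} (hd : ∀ i : ℕ, 0 ≤ d i ∧ d i ≤ m * ((i : ℝ) + 1) ^ (-β)) :
    1 / 4 * 4 ^ (-r) * m ^ ((1 - r) / β) ≤ ∑' i : ℕ, ((i : ℝ) + 1) ^ (-r) / (1 + d i) ^ 2 := by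
  rw [← rpow_inv_rpow_one_sub (by linarith)]
  refine le_tsum_of_le_on_window (by linarith) (Real.one_le_rpow hm (by positivity)) (by norm_num)
    (fun i => by positivity) (summable_rpow_neg_div_one_add_sq hr fun i => (hd i).1)
    fun i hk _ => ?_
  have hd1 : d i ≤ 1 := (hd i).2.trans (mul_rpow_neg_le_one (by linarith) hβ hk (by positivity))
  calc 1 / 4 * ((i : ℝ) + 1) ^ (-r) = ((i : ℝ) + 1) ^ (-r) / 4 := by ring
    _ ≤ ((i : ℝ) + 1) ^ (-r) / (1 + d i) ^ 2 :=
      div_le_div_of_nonneg_left (by positivity) (pow_pos (by linarith [(hd i).1]) 2)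
        (by nlinarith [(hd i).1])

lemma le_tsum_rpow_neg_mul_sq {r β m₁ m₂ : ℝ} (hr : 1 < r) (hβ : 0 < β) (hm₁ : 0 ≤ m₁)
    (hm₂ : 1 ≤ m₂) {d : ℕ → ℝ}
    (hd : ∀ i : ℕ, m₁ * ((i : ℝ) + 1) ^ (-β) ≤ d i ∧ d i ≤ m₂ * ((i : ℝ) + 1) ^ (-β)) :
    (m₁ / m₂ * 4⁻¹ ^ β / 4) ^ 2 * 4 ^ (-r) * m₂ ^ ((1 - r) / β) ≤
      ∑' i : ℕ, ((i : ℝ) + 1) ^ (-r) * (d i / (1 + d i) ^ 2) ^ 2 := by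
  have hd0 (i : ℕ) : 0 ≤ d i := (by positivity : 0 ≤ m₁ * ((i : ℝ) + 1) ^ (-β)).trans (hd i).1
  have hratio (i : ℕ) : 0 ≤ d i / (1 + d i) ^ 2 ∧ d i / (1 + d i) ^ 2 ≤ 1 :=
    ⟨div_nonneg (hd0 i) (sq_nonneg _), div_le_one_of_le₀ (by nlinarith [hd0 i]) (by positivity)⟩
  have hsummable : Summable fun i : ℕ => ((i : ℝ) + 1) ^ (-r) * (d i / (1 + d i) ^ 2) ^ 2 :=
    (summable_rpow_neg_nat_add_one hr).of_nonneg_of_le (fun i => by positivity) fun i =>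
      mul_le_of_le_one_right (by positivity) (pow_le_one₀ (hratio i).1 (hratio i).2)
  rw [← rpow_inv_rpow_one_sub (by linarith)]
  refine le_tsum_of_le_on_window (by linarith) (Real.one_le_rpow hm₂ (by positivity))
    (by positivity) (fun i => by positivity) hsummable fun i hk₁ hk₂ => ?_
  have hk : (0 : ℝ) < (i : ℝ) + 1 := by positivity
  set L := m₂ ^ β⁻¹
  have hd1 : d i ≤ 1 := (hd i).2.trans (mul_rpow_neg_le_one (by linarith) hβ hk₁ hk)
  have hdε : m₁ / m₂ * 4⁻¹ ^ β ≤ d i := calc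
    m₁ / m₂ * 4⁻¹ ^ β ≤ m₁ / m₂ * (L / ((i : ℝ) + 1)) ^ β := by
        gcongr
        rw [le_div_iff₀ hk]
        linarith
    _ = m₁ * ((i : ℝ) + 1) ^ (-β) := by
        rw [rpow_inv_div_rpow (by linarith) hk hβ.ne']
        field_simp
    _ ≤ d i := (hd i).1
  have : m₁ / m₂ * 4⁻¹ ^ β / 4 ≤ d i / (1 + d i) ^ 2 := calc
    m₁ / m₂ * 4⁻¹ ^ β / 4 ≤ d i / 4 := by gcongr
    _ ≤ d i / (1 + d i) ^ 2 :=
        div_le_div_of_nonneg_left (hd0 i) (pow_pos (by linarith [hd0 i]) 2) (by nlinarith [hd0 i])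
  rw [mul_comm]
  gcongr

section Model

variable {p α c₁ c₂ ν v : ℝ} {κ : ℕ → ℝ}

/- The model with `ν = n` and `v = τ_n²`; coordinates are indexed from `0`, so coordinate `i`
carries the weight `i + 1`. `priorVar` is `λ_i`, `snr` is `nλ_iκ_i²`, and `postVar`, `postMeanVar`
are `s_{i,n}`, `t_{i,n}`. -/

noncomputable def priorVar (α v : ℝ) (i : ℕ) : ℝ := v * ((i : ℝ) + 1) ^ (-1 - 2 * α)

noncomputable def snr (α : ℝ) (κ : ℕ → ℝ) (ν v : ℝ) (i : ℕ) : ℝ := ν * priorVar α v i * κ i ^ 2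

noncomputable def postVar (α : ℝ) (κ : ℕ → ℝ) (ν v : ℝ) (i : ℕ) : ℝ :=
  priorVar α v i / (1 + snr α κ ν v i)

noncomputable def postMeanVar (α : ℝ) (κ : ℕ → ℝ) (ν v : ℝ) (i : ℕ) : ℝ :=
  ν * priorVar α v i ^ 2 * κ i ^ 2 / (1 + snr α κ ν v i) ^ 2

lemma priorVar_nonneg (hv : 0 ≤ v) (i : ℕ) : 0 ≤ priorVar α v i := by
  unfold priorVar
  positivity

lemma snr_nonneg (hν : 0 ≤ ν) (hv : 0 ≤ v) (i : ℕ) : 0 ≤ snr α κ ν v i :=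
  mul_nonneg (mul_nonneg hν (priorVar_nonneg hv i)) (sq_nonneg _)

lemma snr_bounds (hc₁ : 0 ≤ c₁) (hν : 0 ≤ ν) (hv : 0 ≤ v) {i : ℕ}
    (hκ : c₁ * ((i : ℝ) + 1) ^ (-p) ≤ κ i ∧ κ i ≤ c₂ * ((i : ℝ) + 1) ^ (-p)) :
    c₁ ^ 2 * (ν * v) * ((i : ℝ) + 1) ^ (-(1 + 2 * α + 2 * p)) ≤ snr α κ ν v i ∧
      snr α κ ν v i ≤ c₂ ^ 2 * (ν * v) * ((i : ℝ) + 1) ^ (-(1 + 2 * α + 2 * p)) := by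
  have hk : (0 : ℝ) < (i : ℝ) + 1 := by positivity
  have hsplit (c : ℝ) : c ^ 2 * (ν * v) * ((i : ℝ) + 1) ^ (-(1 + 2 * α + 2 * p)) =
      ν * priorVar α v i * (c * ((i : ℝ) + 1) ^ (-p)) ^ 2 := by
    have hexp : ((i : ℝ) + 1) ^ (-(1 + 2 * α + 2 * p)) =
        ((i : ℝ) + 1) ^ (-1 - 2 * α) * ((i : ℝ) + 1) ^ (-p * (2 : ℕ)) := by
      rw [← Real.rpow_add hk]
      push_cast
      ring_nf
    rw [priorVar, mul_pow, ← Real.rpow_mul_natCast hk.le, hexp]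
    ring
  have hlam : 0 ≤ ν * priorVar α v i := mul_nonneg hν (priorVar_nonneg hv i)
  have hκ0 : 0 ≤ κ i := (by positivity : 0 ≤ c₁ * ((i : ℝ) + 1) ^ (-p)).trans hκ.1
  rw [hsplit, hsplit, snr]
  exact ⟨by gcongr; exact hκ.1, by gcongr; exact hκ.2⟩

lemma postVar_sub_postMeanVar (hν : 0 ≤ ν) (hv : 0 ≤ v) (i : ℕ) :
    postVar α κ ν v i - postMeanVar α κ ν v i =
      v * (((i : ℝ) + 1) ^ (-(1 + 2 * α)) / (1 + snr α κ ν v i) ^ 2) := by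
  have := snr_nonneg (κ := κ) (α := α) hν hv i
  have : 1 + snr α κ ν v i ≠ 0 := by positivity
  rw [postVar, postMeanVar, neg_add']
  field_simp
  rw [snr, priorVar]
  ring

lemma rpow_neg_two_add_four_mul (α : ℝ) (i : ℕ) :
    ((i : ℝ) + 1) ^ (-(2 + 4 * α)) = (((i : ℝ) + 1) ^ (-1 - 2 * α)) ^ 2 := by
  rw [← Real.rpow_mul_natCast (by positivity)]
  push_cast
  ring_nf

lemma postVar_sq (hν : 0 ≤ ν) (hv : 0 ≤ v) (i : ℕ) :
    postVar α κ ν v i ^ 2 =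
      v ^ 2 * (((i : ℝ) + 1) ^ (-(2 + 4 * α)) / (1 + snr α κ ν v i) ^ 2) := by
  have := snr_nonneg (κ := κ) (α := α) hν hv i
  have : 1 + snr α κ ν v i ≠ 0 := by positivity
  rw [rpow_neg_two_add_four_mul, postVar]
  field_simp
  rw [priorVar]
  ring

lemma postMeanVar_sq (hν : 0 ≤ ν) (hv : 0 ≤ v) (i : ℕ) :
    postMeanVar α κ ν v i ^ 2 = v ^ 2 * (((i : ℝ) + 1) ^ (-(2 + 4 * α)) *
      (snr α κ ν v i / (1 + snr α κ ν v i) ^ 2) ^ 2) := by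
  have := snr_nonneg (κ := κ) (α := α) hν hv i
  have : 1 + snr α κ ν v i ≠ 0 := by positivity
  rw [rpow_neg_two_add_four_mul, postMeanVar]
  field_simp
  rw [snr, priorVar]
  ring

lemma postMeanVar_nonneg (hν : 0 ≤ ν) (i : ℕ) : 0 ≤ postMeanVar α κ ν v i := by
  unfold postMeanVar
  positivity

lemma postMeanVar_le_postVar (hν : 0 ≤ ν) (hv : 0 ≤ v) (i : ℕ) :
    postMeanVar α κ ν v i ≤ postVar α κ ν v i := by
  have hlam := priorVar_nonneg (α := α) hv i
  have hd := snr_nonneg (κ := κ) (α := α) hν hv i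
  rw [postMeanVar, postVar, div_le_div_iff₀ (by positivity) (by positivity)]
  rw [snr] at hd ⊢
  nlinarith [mul_nonneg hlam hd, mul_nonneg (mul_nonneg hlam hd) hd]

theorem exists_tsum_postVar_sub_postMeanVar_bounds (hp : 0 ≤ p) (hα : 0 < α) (hc₁ : 0 < c₁)
    (hκ : ∀ i : ℕ, c₁ * ((i : ℝ) + 1) ^ (-p) ≤ κ i ∧ κ i ≤ c₂ * ((i : ℝ) + 1) ^ (-p)) :
    ∃ a A : ℝ, 0 < a ∧ a ≤ A ∧ ∀ ν τ : ℝ, 0 ≤ ν → 1 ≤ c₁ ^ 2 * (ν * τ ^ 2) →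
      a * (τ ^ 2 * (ν * τ ^ 2) ^ (-(2 * α / (1 + 2 * α + 2 * p)))) ≤
          ∑' i : ℕ, (postVar α κ ν (τ ^ 2) i - postMeanVar α κ ν (τ ^ 2) i) ∧
        ∑' i : ℕ, (postVar α κ ν (τ ^ 2) i - postMeanVar α κ ν (τ ^ 2) i) ≤
          A * (τ ^ 2 * (ν * τ ^ 2) ^ (-(2 * α / (1 + 2 * α + 2 * p)))) := by
  have hc₁₂ : c₁ ≤ c₂ := by simpa using (hκ 0).1.trans (hκ 0).2
  set e := -(2 * α / (1 + 2 * α + 2 * p))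
  have he : (1 - (1 + 2 * α)) / (1 + 2 * α + 2 * p) = e := by ring
  set a := 1 / 4 * 4 ^ (-(1 + 2 * α)) * (c₂ ^ 2) ^ e
  set A := (2 + 1 / (1 + 2 * α - 1)) * (c₁ ^ 2) ^ e
  have ha : 0 < a :=
    mul_pos (by positivity) (Real.rpow_pos_of_pos (pow_pos (hc₁.trans_le hc₁₂) 2) _)
  refine ⟨a, max A a, ha, le_max_right _ _, fun ν τ hν hm => ?_⟩
  have hσ : 0 < ν * τ ^ 2 := pos_of_mul_pos_right (one_pos.trans_le hm) (sq_nonneg c₁)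
  have hm₂ : 1 ≤ c₂ ^ 2 * (ν * τ ^ 2) := hm.trans (by gcongr)
  have hd (i : ℕ) := snr_bounds (α := α) hc₁.le hν (sq_nonneg τ) (hκ i)
  have hd0 := snr_nonneg (α := α) (κ := κ) hν (sq_nonneg τ)
  have hrate (c : ℝ) : (c ^ 2 * (ν * τ ^ 2)) ^ ((1 - (1 + 2 * α)) / (1 + 2 * α + 2 * p)) =
      (c ^ 2) ^ e * (ν * τ ^ 2) ^ e := by
    rw [he, Real.mul_rpow (sq_nonneg c) hσ.le]
  have hupper := tsum_rpow_neg_div_one_add_sq_le (r := 1 + 2 * α) (by linarith) (by linarith) hm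
    fun i => (hd i).1
  have hlower := le_tsum_rpow_neg_div_one_add_sq (r := 1 + 2 * α) (by linarith) (by positivity) hm₂
    fun i => ⟨hd0 i, (hd i).2⟩
  rw [hrate] at hupper hlower
  rw [tsum_congr fun i => postVar_sub_postMeanVar hν (sq_nonneg τ) i, tsum_mul_left]
  constructor
  · calc a * (τ ^ 2 * (ν * τ ^ 2) ^ e)
        = τ ^ 2 * (1 / 4 * 4 ^ (-(1 + 2 * α)) * ((c₂ ^ 2) ^ e * (ν * τ ^ 2) ^ e)) := by ring
      _ ≤ _ := by gcongr
  · calc τ ^ 2 * _ ≤ τ ^ 2 * ((2 + 1 / (1 + 2 * α - 1)) * ((c₁ ^ 2) ^ e * (ν * τ ^ 2) ^ e)) := by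
          gcongr
      _ = A * (τ ^ 2 * (ν * τ ^ 2) ^ e) := by ring
      _ ≤ max A a * (τ ^ 2 * (ν * τ ^ 2) ^ e) := by gcongr; exact le_max_left _ _

theorem exists_tsum_postMeanVar_sq_postVar_sq_bounds (hp : 0 ≤ p) (hα : 0 < α) (hc₁ : 0 < c₁)
    (hκ : ∀ i : ℕ, c₁ * ((i : ℝ) + 1) ^ (-p) ≤ κ i ∧ κ i ≤ c₂ * ((i : ℝ) + 1) ^ (-p)) :
    ∃ a A : ℝ, 0 < a ∧ a ≤ A ∧ ∀ ν τ : ℝ, 0 ≤ ν → 1 ≤ c₁ ^ 2 * (ν * τ ^ 2) →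
      a * (τ ^ 4 * (ν * τ ^ 2) ^ (-((1 + 4 * α) / (1 + 2 * α + 2 * p)))) ≤
          ∑' i : ℕ, postMeanVar α κ ν (τ ^ 2) i ^ 2 ∧
        ∑' i : ℕ, postMeanVar α κ ν (τ ^ 2) i ^ 2 ≤ ∑' i : ℕ, postVar α κ ν (τ ^ 2) i ^ 2 ∧
        ∑' i : ℕ, postVar α κ ν (τ ^ 2) i ^ 2 ≤
          A * (τ ^ 4 * (ν * τ ^ 2) ^ (-((1 + 4 * α) / (1 + 2 * α + 2 * p)))) := by
  have hc₁₂ : c₁ ≤ c₂ := by simpa using (hκ 0).1.trans (hκ 0).2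
  have hc₂ : 0 < c₂ := hc₁.trans_le hc₁₂
  set e := -((1 + 4 * α) / (1 + 2 * α + 2 * p))
  have he : (1 - (2 + 4 * α)) / (1 + 2 * α + 2 * p) = e := by ring
  set a := (c₁ ^ 2 / c₂ ^ 2 * 4⁻¹ ^ (1 + 2 * α + 2 * p) / 4) ^ 2 * 4 ^ (-(2 + 4 * α)) *
    (c₂ ^ 2) ^ e
  set A := (2 + 1 / (2 + 4 * α - 1)) * (c₁ ^ 2) ^ e
  have ha : 0 < a := mul_pos (by positivity) (Real.rpow_pos_of_pos (pow_pos hc₂ 2) _)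
  refine ⟨a, max A a, ha, le_max_right _ _, fun ν τ hν hm => ?_⟩
  have hσ : 0 < ν * τ ^ 2 := pos_of_mul_pos_right (one_pos.trans_le hm) (sq_nonneg c₁)
  have hm₂ : 1 ≤ c₂ ^ 2 * (ν * τ ^ 2) := hm.trans (by gcongr)
  have hd (i : ℕ) := snr_bounds (α := α) hc₁.le hν (sq_nonneg τ) (hκ i)
  have hd0 := snr_nonneg (α := α) (κ := κ) hν (sq_nonneg τ)
  have hrate (c : ℝ) : (c ^ 2 * (ν * τ ^ 2)) ^ ((1 - (2 + 4 * α)) / (1 + 2 * α + 2 * p)) =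
      (c ^ 2) ^ e * (ν * τ ^ 2) ^ e := by
    rw [he, Real.mul_rpow (sq_nonneg c) hσ.le]
  have hupper := tsum_rpow_neg_div_one_add_sq_le (r := 2 + 4 * α) (by linarith) (by linarith) hm
    fun i => (hd i).1
  have hlower := le_tsum_rpow_neg_mul_sq (r := 2 + 4 * α) (by linarith) (by positivity)
    (by positivity) hm₂ hd
  rw [hrate, mul_div_mul_right _ _ hσ.ne'] at hlower
  rw [hrate] at hupper
  have hs : Summable fun i => postVar α κ ν (τ ^ 2) i ^ 2 := by
    rw [funext fun i => postVar_sq hν (sq_nonneg τ) i]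
    exact (summable_rpow_neg_div_one_add_sq (by linarith) hd0).mul_left _
  have hts (i : ℕ) : postMeanVar α κ ν (τ ^ 2) i ^ 2 ≤ postVar α κ ν (τ ^ 2) i ^ 2 :=
    pow_le_pow_left₀ (postMeanVar_nonneg hν i) (postMeanVar_le_postVar hν (sq_nonneg τ) i) 2
  refine ⟨?_, (hs.of_nonneg_of_le (fun i => sq_nonneg _) hts).tsum_le_tsum hts hs, ?_⟩
  · rw [tsum_congr fun i => postMeanVar_sq hν (sq_nonneg τ) i, tsum_mul_left]
    calc a * (τ ^ 4 * (ν * τ ^ 2) ^ e)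
        = (τ ^ 2) ^ 2 * ((c₁ ^ 2 / c₂ ^ 2 * 4⁻¹ ^ (1 + 2 * α + 2 * p) / 4) ^ 2 *
            4 ^ (-(2 + 4 * α)) * ((c₂ ^ 2) ^ e * (ν * τ ^ 2) ^ e)) := by ring
      _ ≤ _ := by gcongr
  · rw [tsum_congr fun i => postVar_sq hν (sq_nonneg τ) i, tsum_mul_left]
    calc (τ ^ 2) ^ 2 * _
        ≤ (τ ^ 2) ^ 2 * ((2 + 1 / (2 + 4 * α - 1)) * ((c₁ ^ 2) ^ e * (ν * τ ^ 2) ^ e)) := by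
          gcongr
      _ = A * (τ ^ 4 * (ν * τ ^ 2) ^ e) := by ring
      _ ≤ max A a * (τ ^ 4 * (ν * τ ^ 2) ^ e) := by gcongr; exact le_max_left _ _

end Model

lemma pow_four_mul_rpow_eq_sq_mul_rpow {α β τ σ : ℝ} (hσ : 0 < σ) :
    τ ^ 4 * σ ^ (-((1 + 4 * α) / β)) = (τ ^ 2 * σ ^ (-(2 * α / β))) ^ 2 * σ ^ (-(1 / β)) := by
  rw [mul_pow, ← Real.rpow_mul_natCast hσ.le, mul_assoc, ← Real.rpow_add hσ]
  ring_nf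

lemma tendsto_sqrt_add_sqrt_div_nhds_zero {ι : Type*} {l : Filter ι} {D F G ρ ε : ι → ℝ}
    {a B : ℝ} (ha : 0 < a) (hD : ∀ᶠ n in l, 0 < ρ n ∧ a * ρ n ≤ D n)
    (hFG : ∀ᶠ n in l, 0 ≤ F n ∧ 0 ≤ G n ∧ F n ≤ B * (ρ n ^ 2 * ε n) ∧ G n ≤ B * (ρ n ^ 2 * ε n))
    (hε : Tendsto ε l (𝓝 0)) :
    Tendsto (fun n => (√(2 * F n) + √(2 * G n)) / D n) l (𝓝 0) := by
  have hlim : Tendsto (fun n => 2 * √(2 * B * ε n) / a) l (𝓝 0) := by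
    simpa using ((hε.const_mul (2 * B)).sqrt.const_mul 2).div_const a
  refine squeeze_zero' ?_ ?_ hlim
  · filter_upwards [hD] with n ⟨hρ, hρD⟩
    exact div_nonneg (by positivity) ((mul_pos ha hρ).le.trans hρD)
  · filter_upwards [hD, hFG] with n ⟨hρ, hρD⟩ ⟨hF, hG, hFB, hGB⟩
    have hsqrt : √(2 * (B * (ρ n ^ 2 * ε n))) = ρ n * √(2 * B * ε n) := by
      rw [show 2 * (B * (ρ n ^ 2 * ε n)) = ρ n ^ 2 * (2 * B * ε n) by ring,
        Real.sqrt_mul (sq_nonneg _), Real.sqrt_sq hρ.le]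
    calc (√(2 * F n) + √(2 * G n)) / D n
        ≤ (2 * (ρ n * √(2 * B * ε n))) / (a * ρ n) := by
          refine div_le_div₀ (by positivity) ?_ (by positivity) hρD
          have hF' := Real.sqrt_le_sqrt (by linarith : 2 * F n ≤ 2 * (B * (ρ n ^ 2 * ε n)))
          have hG' := Real.sqrt_le_sqrt (by linarith : 2 * G n ≤ 2 * (B * (ρ n ^ 2 * ε n)))
          rw [hsqrt] at hF' hG'
          linarith
      _ = 2 * √(2 * B * ε n) / a := by field_simp

theorem stmt11_general (p α : ℝ) (hp : 0 ≤ p) (hα : 0 < α)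
    (τ : ℕ → ℝ)
    (hnτ : Tendsto (fun n : ℕ => (n : ℝ) * (τ n) ^ 2) atTop atTop)
    (κ : ℕ → ℝ) (c₁ c₂ : ℝ) (hc₁ : 0 < c₁)
    (hκ : ∀ i : ℕ, c₁ * ((i : ℝ) + 1) ^ (-p) ≤ κ i ∧ κ i ≤ c₂ * ((i : ℝ) + 1) ^ (-p)) :
    let lam : ℕ → ℕ → ℝ := fun n i => (τ n) ^ 2 * ((i : ℝ) + 1) ^ (-1 - 2 * α)
    let s : ℕ → ℕ → ℝ := fun n i => lam n i / (1 + (n : ℝ) * lam n i * (κ i) ^ 2)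
    let T : ℕ → ℕ → ℝ := fun n i =>
      (n : ℝ) * (lam n i) ^ 2 * (κ i) ^ 2 / (1 + (n : ℝ) * lam n i * (κ i) ^ 2) ^ 2
    let rate1 : ℕ → ℝ := fun n =>
      (τ n) ^ 2 * ((n : ℝ) * (τ n) ^ 2) ^ (-(2 * α / (1 + 2 * α + 2 * p)))
    let rate2 : ℕ → ℝ := fun n =>
      (τ n) ^ 4 * ((n : ℝ) * (τ n) ^ 2) ^ (-((1 + 4 * α) / (1 + 2 * α + 2 * p)))
    (∃ c C : ℝ, 0 < c ∧ c ≤ C ∧ ∀ᶠ n : ℕ in atTop,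
      c * rate1 n ≤ (∑' i : ℕ, (s n i - T n i)) ∧
      (∑' i : ℕ, (s n i - T n i)) ≤ C * rate1 n) ∧
    (∃ c C : ℝ, 0 < c ∧ c ≤ C ∧ ∀ᶠ n : ℕ in atTop,
      (c * rate2 n ≤ (∑' i : ℕ, (s n i) ^ 2) ∧ (∑' i : ℕ, (s n i) ^ 2) ≤ C * rate2 n) ∧
      (c * rate2 n ≤ (∑' i : ℕ, (T n i) ^ 2) ∧ (∑' i : ℕ, (T n i) ^ 2) ≤ C * rate2 n)) ∧
    Tendsto (fun n : ℕ =>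
        (Real.sqrt (2 * ∑' i : ℕ, (s n i) ^ 2) + Real.sqrt (2 * ∑' i : ℕ, (T n i) ^ 2)) /
          (∑' i : ℕ, (s n i - T n i))) atTop (nhds 0) := by
  intro lam s T rate1 rate2
  obtain ⟨a₁, A₁, ha₁, haA₁, h₁⟩ := exists_tsum_postVar_sub_postMeanVar_bounds hp hα hc₁ hκ
  obtain ⟨a₂, A₂, ha₂, haA₂, h₂⟩ := exists_tsum_postMeanVar_sq_postVar_sq_bounds hp hα hc₁ hκ
  have hlarge : ∀ᶠ n : ℕ in atTop, 1 ≤ c₁ ^ 2 * ((n : ℝ) * τ n ^ 2) :=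
    (hnτ.const_mul_atTop (by positivity)).eventually_ge_atTop 1
  have hb₁ := hlarge.mono fun n hn => h₁ n (τ n) n.cast_nonneg hn
  have hb₂ := hlarge.mono fun n hn => h₂ n (τ n) n.cast_nonneg hn
  refine ⟨⟨a₁, A₁, ha₁, haA₁, hb₁⟩, ⟨a₂, A₂, ha₂, haA₂, hb₂.mono fun n h =>
    ⟨⟨h.1.trans h.2.1, h.2.2⟩, h.1, h.2.1.trans h.2.2⟩⟩, ?_⟩
  refine tendsto_sqrt_add_sqrt_div_nhds_zero (ρ := rate1) (B := A₂) ha₁ ?_ ?_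
    ((tendsto_rpow_neg_atTop (by positivity : 0 < 1 / (1 + 2 * α + 2 * p))).comp hnτ)
  · filter_upwards [hb₁, hnτ.eventually_gt_atTop 0] with n hn hσ
    exact ⟨mul_pos (pos_of_mul_pos_right hσ n.cast_nonneg) (Real.rpow_pos_of_pos hσ _), hn.1⟩
  · filter_upwards [hb₂, hnτ.eventually_gt_atTop 0] with n hn hσ
    have hrate : rate2 n = rate1 n ^ 2 * ((n : ℝ) * τ n ^ 2) ^ (-(1 / (1 + 2 * α + 2 * p))) :=
      pow_four_mul_rpow_eq_sq_mul_rpow hσ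
    rw [Function.comp_apply, ← hrate]
    exact ⟨tsum_nonneg fun i => sq_nonneg _, tsum_nonneg fun i => sq_nonneg _, hn.2.2,
      hn.2.1.trans hn.2.2⟩

/-- Eigenvalue comparison for the credibility proof: with
`s_{i,n} = λᵢ/(1+nλᵢκᵢ²)` and `t_{i,n} = nλᵢ²κᵢ²/(1+nλᵢκᵢ²)²`, one has
`∑(s-t) ≍ τ_n²(nτ_n²)^{-2α/(1+2α+2p)}` and
`∑ s² ≍ ∑ t² ≍ τ_n⁴(nτ_n²)^{-(1+4α)/(1+2α+2p)}`; consequently the standard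
deviations of `U_n` and `V_n` are of smaller order than `E(U_n - V_n)`. -/
theorem stmt11 (p α : ℝ) (hp : 0 ≤ p) (hα : 0 < α)
    (τ : ℕ → ℝ) (hτpos : ∀ n, 0 < τ n)
    (hnτ : Tendsto (fun n : ℕ => (n : ℝ) * (τ n) ^ 2) atTop atTop)
    (κ : ℕ → ℝ) (c₁ c₂ : ℝ) (hc₁ : 0 < c₁)
    (hκ : ∀ i : ℕ, c₁ * ((i : ℝ) + 1) ^ (-p) ≤ κ i ∧ κ i ≤ c₂ * ((i : ℝ) + 1) ^ (-p)) :
    let lam : ℕ → ℕ → ℝ := fun n i => (τ n) ^ 2 * ((i : ℝ) + 1) ^ (-1 - 2 * α)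
    let s : ℕ → ℕ → ℝ := fun n i => lam n i / (1 + (n : ℝ) * lam n i * (κ i) ^ 2)
    let T : ℕ → ℕ → ℝ := fun n i =>
      (n : ℝ) * (lam n i) ^ 2 * (κ i) ^ 2 / (1 + (n : ℝ) * lam n i * (κ i) ^ 2) ^ 2
    let rate1 : ℕ → ℝ := fun n =>
      (τ n) ^ 2 * ((n : ℝ) * (τ n) ^ 2) ^ (-(2 * α / (1 + 2 * α + 2 * p)))
    let rate2 : ℕ → ℝ := fun n =>
      (τ n) ^ 4 * ((n : ℝ) * (τ n) ^ 2) ^ (-((1 + 4 * α) / (1 + 2 * α + 2 * p)))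
    (∃ c C : ℝ, 0 < c ∧ c ≤ C ∧ ∀ᶠ n : ℕ in atTop,
      c * rate1 n ≤ (∑' i : ℕ, (s n i - T n i)) ∧
      (∑' i : ℕ, (s n i - T n i)) ≤ C * rate1 n) ∧
    (∃ c C : ℝ, 0 < c ∧ c ≤ C ∧ ∀ᶠ n : ℕ in atTop,
      (c * rate2 n ≤ (∑' i : ℕ, (s n i) ^ 2) ∧ (∑' i : ℕ, (s n i) ^ 2) ≤ C * rate2 n) ∧
      (c * rate2 n ≤ (∑' i : ℕ, (T n i) ^ 2) ∧ (∑' i : ℕ, (T n i) ^ 2) ≤ C * rate2 n)) ∧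
    Tendsto (fun n : ℕ =>
        (Real.sqrt (2 * ∑' i : ℕ, (s n i) ^ 2) + Real.sqrt (2 * ∑' i : ℕ, (T n i) ^ 2)) /
          (∑' i : ℕ, (s n i - T n i))) atTop (nhds 0) :=
  stmt11_general p α hp hα τ hnτ κ c₁ c₂ hc₁ hκ
end

section
/- For the Cauchy–Schwarz bound on the bias of the posterior mean of a linear functional: for any μ₀ with ‖μ₀‖_β < ∞ and any sequence (l_i), one has (Σ_i l_iμ_{0,i}/(1+nλ_iκ_i²))² ≤ ‖μ₀‖_β² · Σ_i l_i² i^{-2β}/(1+nλ_iκ_i²)²; consequently, if λ_iκ_i² ≍ τ_n² i^{-1-2α-2p} and Σ_i l_i²i^{2q} < ∞ with q ≥ −β, then |LAKμ₀ − Lμ₀| ≲ ‖μ₀‖_β ‖l‖_q (nτ_n²)^{-min((β+q)/(1+2α+2p), 1)}. -/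
open Filter Topology

/-!
Writing `l i * μ i / D i = (μ i * x i ^ β) * (l i * x i ^ (-β) / D i)` with `x i = i + 1`, the first
part is Cauchy–Schwarz in `ℓ²`. For the rate, the denominator `D i = 1 + n λ_i κ_i²` dominates both
`1` and `K x i ^ (-r)` with `K = c₁² n τ_n²` and `r = 1 + 2α + 2p`, hence also their interpolant
`(K x i ^ (-r)) ^ t` for `0 ≤ t ≤ 1`. With `r t ≤ β + q` this gives `x i ^ (-(β + q)) ≤ K ^ (-t) D i`,
so every term of the second Cauchy–Schwarz factor is at most `K ^ (-2t) l i ² x i ^ (2q)`.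
-/

lemma sq_rpow {x : ℝ} (hx : 0 ≤ x) (e : ℝ) : (x ^ e) ^ 2 = x ^ (2 * e) := by
  rw [mul_comm, ← Real.rpow_mul_natCast hx]
  norm_num

lemma rpow_le_max_one_self {y t : ℝ} (hy : 0 ≤ y) (ht₀ : 0 ≤ t) (ht₁ : t ≤ 1) :
    y ^ t ≤ max 1 y := by
  rcases le_total y 1 with h | h
  · exact le_max_of_le_left (Real.rpow_le_one hy h ht₀)
  · exact le_max_of_le_right (Real.rpow_le_self_of_one_le h ht₁)

lemma rpow_neg_le_rpow_neg_mul {A x D r s t : ℝ} (hA : 0 < A) (hx : 1 ≤ x) (ht₀ : 0 ≤ t)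
    (ht₁ : t ≤ 1) (hrt : r * t ≤ s) (hD₁ : 1 ≤ D) (hD : A * x ^ (-r) ≤ D) :
    x ^ (-s) ≤ A ^ (-t) * D := by
  have hx₀ : 0 < x := one_pos.trans_le hx
  have hAx : 0 ≤ A * x ^ (-r) := by positivity
  have hpow : A ^ t * x ^ (-(r * t)) ≤ D := by
    rw [neg_mul_eq_neg_mul, Real.rpow_mul hx₀.le, ← Real.mul_rpow hA.le (by positivity)]
    exact (rpow_le_max_one_self hAx ht₀ ht₁).trans (max_le hD₁ hD)
  calc x ^ (-s) ≤ x ^ (-(r * t)) := Real.rpow_le_rpow_of_exponent_le hx (neg_le_neg hrt)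
    _ = A ^ (-t) * (A ^ t * x ^ (-(r * t))) := by
      rw [← mul_assoc, ← Real.rpow_add hA, neg_add_cancel, Real.rpow_zero, one_mul]
    _ ≤ A ^ (-t) * D := by gcongr

lemma sq_mul_rpow_div_sq_le {x D l B β q : ℝ} (hx : 1 ≤ x) (hD : 0 < D)
    (hB : x ^ (-(β + q)) ≤ B * D) :
    l ^ 2 * x ^ (-2 * β) / D ^ 2 ≤ B ^ 2 * (l ^ 2 * x ^ (2 * q)) := by
  have hx₀ : 0 < x := one_pos.trans_le hx
  have hsplit : x ^ (-2 * β) = x ^ (2 * q) * (x ^ (-(β + q))) ^ 2 := by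
    rw [sq_rpow hx₀.le, ← Real.rpow_add hx₀]
    ring_nf
  have hB' : x ^ (-(β + q)) / D ≤ B := (div_le_iff₀ hD).2 hB
  calc l ^ 2 * x ^ (-2 * β) / D ^ 2 = (x ^ (-(β + q)) / D) ^ 2 * (l ^ 2 * x ^ (2 * q)) := by
        rw [hsplit]; ring
    _ ≤ B ^ 2 * (l ^ 2 * x ^ (2 * q)) := by gcongr

lemma sq_mul_mul_rpow_le {x N c κ p e : ℝ} (hx : 0 < x) (hN : 0 ≤ N) (hc : 0 ≤ c)
    (hκ : c * x ^ (-p) ≤ κ) : c ^ 2 * N * x ^ (e - 2 * p) ≤ N * x ^ e * κ ^ 2 := by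
  have hsplit : c ^ 2 * N * x ^ (e - 2 * p) = N * x ^ e * (c * x ^ (-p)) ^ 2 := by
    rw [mul_pow, sq_rpow hx.le, sub_eq_add_neg, Real.rpow_add hx, mul_neg]
    ring
  rw [hsplit]
  gcongr

lemma abs_le_mul_sqrt_mul_sqrt {X A B c : ℝ} (hA : 0 ≤ A) (hc : 0 ≤ c)
    (h : X ^ 2 ≤ A * (c ^ 2 * B)) : |X| ≤ c * √A * √B := by
  refine (Real.abs_le_sqrt h).trans_eq ?_
  rw [Real.sqrt_mul hA, Real.sqrt_mul (sq_nonneg c), Real.sqrt_sq hc]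
  ring

section

variable {ι : Type*} {x μ l D : ι → ℝ} {β q : ℝ}

lemma Summable.mul_of_summable_sq {a b : ι → ℝ} (ha : Summable fun i => a i ^ 2)
    (hb : Summable fun i => b i ^ 2) : Summable fun i => a i * b i :=
  ((ha.add hb).div_const 2).of_norm_bounded fun i => by
    rw [Real.norm_eq_abs, abs_mul]
    nlinarith [sq_nonneg (|a i| - |b i|), sq_abs (a i), sq_abs (b i)]

lemma sq_tsum_mul_le_tsum_sq_mul_tsum_sq {a b : ι → ℝ}
    (ha : Summable fun i => a i ^ 2) (hb : Summable fun i => b i ^ 2) :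
    (∑' i, a i * b i) ^ 2 ≤ (∑' i, a i ^ 2) * ∑' i, b i ^ 2 :=
  le_of_tendsto' ((ha.mul_of_summable_sq hb).hasSum.pow 2) fun s =>
    (Finset.sum_mul_sq_le_sq_mul_sq s a b).trans <|
      mul_le_mul (ha.sum_le_tsum s fun _ _ => sq_nonneg _) (hb.sum_le_tsum s fun _ _ => sq_nonneg _)
        (Finset.sum_nonneg fun _ _ => sq_nonneg _) (tsum_nonneg fun _ => sq_nonneg _)

lemma sq_tsum_mul_div_le (hx : ∀ i, 0 < x i)
    (hμ : Summable fun i => μ i ^ 2 * x i ^ (2 * β))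
    (hl : Summable fun i => l i ^ 2 * x i ^ (-2 * β) / D i ^ 2) :
    (∑' i, l i * μ i / D i) ^ 2 ≤
      (∑' i, μ i ^ 2 * x i ^ (2 * β)) * ∑' i, l i ^ 2 * x i ^ (-2 * β) / D i ^ 2 := by
  have ha (i) : μ i ^ 2 * x i ^ (2 * β) = (μ i * x i ^ β) ^ 2 := by
    rw [mul_pow, sq_rpow (hx i).le]
  have hb (i) : l i ^ 2 * x i ^ (-2 * β) / D i ^ 2 = (l i * x i ^ (-β) / D i) ^ 2 := by
    rw [div_pow, mul_pow, sq_rpow (hx i).le, mul_neg, neg_mul]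
  have hab (i) : l i * μ i / D i = μ i * x i ^ β * (l i * x i ^ (-β) / D i) := by
    have := (Real.rpow_pos_of_pos (hx i) β).ne'
    rw [Real.rpow_neg (hx i).le]
    field_simp
  simp only [ha, hb, hab] at hμ hl ⊢
  exact sq_tsum_mul_le_tsum_sq_mul_tsum_sq hμ hl

lemma summable_and_tsum_sq_mul_rpow_div_sq_le (hx : ∀ i, 1 ≤ x i) (hD : ∀ i, 0 < D i) {B : ℝ}
    (hB : ∀ i, x i ^ (-(β + q)) ≤ B * D i) (hl : Summable fun i => l i ^ 2 * x i ^ (2 * q)) :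
    (Summable fun i => l i ^ 2 * x i ^ (-2 * β) / D i ^ 2) ∧
      ∑' i, l i ^ 2 * x i ^ (-2 * β) / D i ^ 2 ≤ B ^ 2 * ∑' i, l i ^ 2 * x i ^ (2 * q) := by
  have hle (i) := sq_mul_rpow_div_sq_le (l := l i) (hx i) (hD i) (hB i)
  have hs := (hl.mul_left (B ^ 2)).of_nonneg_of_le
    (fun i => by have := (hD i).le; have := hx i; positivity) hle
  exact ⟨hs, (hs.tsum_le_tsum hle (hl.mul_left _)).trans_eq tsum_mul_left⟩

lemma summable_sq_mul_rpow_div_sq (hx : ∀ i, 1 ≤ x i) (hD : ∀ i, 1 ≤ D i) (hq : -β ≤ q)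
    (hl : Summable fun i => l i ^ 2 * x i ^ (2 * q)) :
    Summable fun i => l i ^ 2 * x i ^ (-2 * β) / D i ^ 2 :=
  (summable_and_tsum_sq_mul_rpow_div_sq_le hx (fun i => one_pos.trans_le (hD i)) (B := 1)
    (fun i => by
      rw [one_mul]
      exact (Real.rpow_le_one_of_one_le_of_nonpos (hx i) (by linarith)).trans (hD i)) hl).1

lemma abs_tsum_mul_div_le (hx : ∀ i, 1 ≤ x i) (hD₁ : ∀ i, 1 ≤ D i) {K r t : ℝ} (hK : 0 < K)
    (hD : ∀ i, K * x i ^ (-r) ≤ D i) (ht₀ : 0 ≤ t) (ht₁ : t ≤ 1) (hrt : r * t ≤ β + q)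
    (hμ : Summable fun i => μ i ^ 2 * x i ^ (2 * β))
    (hl : Summable fun i => l i ^ 2 * x i ^ (2 * q)) :
    |∑' i, l i * μ i / D i| ≤
      K ^ (-t) * √(∑' i, μ i ^ 2 * x i ^ (2 * β)) * √(∑' i, l i ^ 2 * x i ^ (2 * q)) := by
  have hx₀ (i) : 0 < x i := one_pos.trans_le (hx i)
  obtain ⟨hs, hsum⟩ := summable_and_tsum_sq_mul_rpow_div_sq_le hx
    (fun i => one_pos.trans_le (hD₁ i))
    (fun i => rpow_neg_le_rpow_neg_mul hK (hx i) ht₀ ht₁ hrt (hD₁ i) (hD i)) hl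
  have hA : 0 ≤ ∑' i, μ i ^ 2 * x i ^ (2 * β) :=
    tsum_nonneg fun i => by have := hx₀ i; positivity
  exact abs_le_mul_sqrt_mul_sqrt hA (by positivity)
    ((sq_tsum_mul_div_le hx₀ hμ hs).trans (mul_le_mul_of_nonneg_left hsum hA))

end

theorem stmt17_general (p α β q : ℝ) (hp : 0 ≤ p) (hα : 0 < α) (hq : -β ≤ q)
    (τ : ℕ → ℝ)
    (hnτ : Tendsto (fun n : ℕ => (n : ℝ) * (τ n) ^ 2) atTop atTop)
    (κ : ℕ → ℝ) (c₁ c₂ : ℝ) (hc₁ : 0 < c₁)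
    (hκ : ∀ i : ℕ, c₁ * ((i : ℝ) + 1) ^ (-p) ≤ κ i ∧ κ i ≤ c₂ * ((i : ℝ) + 1) ^ (-p))
    (μ₀ l : ℕ → ℝ)
    (hμ₀ : Summable (fun i : ℕ => (μ₀ i) ^ 2 * ((i : ℝ) + 1) ^ (2 * β)))
    (hl : Summable (fun i : ℕ => (l i) ^ 2 * ((i : ℝ) + 1) ^ (2 * q))) :
    let lam : ℕ → ℕ → ℝ := fun n i => (τ n) ^ 2 * ((i : ℝ) + 1) ^ (-1 - 2 * α)
    (∀ n : ℕ,
      (∑' i : ℕ, l i * μ₀ i / (1 + (n : ℝ) * lam n i * (κ i) ^ 2)) ^ 2 ≤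
        (∑' i : ℕ, (μ₀ i) ^ 2 * ((i : ℝ) + 1) ^ (2 * β)) *
          ∑' i : ℕ, (l i) ^ 2 * ((i : ℝ) + 1) ^ (-2 * β) /
            (1 + (n : ℝ) * lam n i * (κ i) ^ 2) ^ 2) ∧
    (∃ C : ℝ, 0 < C ∧ ∀ᶠ n : ℕ in atTop,
      |∑' i : ℕ, l i * μ₀ i / (1 + (n : ℝ) * lam n i * (κ i) ^ 2)| ≤
        C * Real.sqrt (∑' i : ℕ, (μ₀ i) ^ 2 * ((i : ℝ) + 1) ^ (2 * β)) *
          Real.sqrt (∑' i : ℕ, (l i) ^ 2 * ((i : ℝ) + 1) ^ (2 * q)) *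
          ((n : ℝ) * (τ n) ^ 2) ^ (-(min ((β + q) / (1 + 2 * α + 2 * p)) 1))) := by
  intro lam
  set r := 1 + 2 * α + 2 * p
  set t := min ((β + q) / r) 1
  have hr : 0 < r := by positivity
  have ht₀ : 0 ≤ t := le_min (div_nonneg (by linarith) hr.le) zero_le_one
  have hrt : r * t ≤ β + q :=
    (mul_le_mul_of_nonneg_left (min_le_left _ _) hr.le).trans_eq (mul_div_cancel₀ _ hr.ne')
  have hx (i : ℕ) : (1 : ℝ) ≤ i + 1 := le_add_of_nonneg_left i.cast_nonneg
  have hD₁ (n i : ℕ) : 1 ≤ 1 + n * lam n i * κ i ^ 2 :=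
    le_add_of_nonneg_right (by have := hx i; positivity)
  have hD (n i : ℕ) :
      c₁ ^ 2 * (n * τ n ^ 2) * ((i : ℝ) + 1) ^ (-r) ≤ 1 + n * lam n i * κ i ^ 2 := by
    have := sq_mul_mul_rpow_le (e := -1 - 2 * α) (one_pos.trans_le (hx i))
      (by positivity : (0 : ℝ) ≤ n * τ n ^ 2) hc₁.le (hκ i).1
    rw [show -r = -1 - 2 * α - 2 * p by ring]
    simp only [lam]
    linarith
  refine ⟨fun n => sq_tsum_mul_div_le (fun i => one_pos.trans_le (hx i)) hμ₀
    (summable_sq_mul_rpow_div_sq hx (hD₁ n) hq hl), (c₁ ^ 2) ^ (-t), by positivity, ?_⟩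
  filter_upwards [hnτ.eventually_gt_atTop 0] with n hm
  refine (abs_tsum_mul_div_le hx (hD₁ n) (by positivity) (hD n) ht₀ (min_le_right _ _) hrt
    hμ₀ hl).trans_eq ?_
  rw [Real.mul_rpow (by positivity) hm.le]
  ring

/-- Cauchy–Schwarz bound on the bias of the posterior mean of a linear functional,
and its consequence: `(∑ l_iμ_{0,i}/(1+nλ_iκ_i²))² ≤ ‖μ₀‖_β² ∑ l_i²i^{-2β}/(1+nλ_iκ_i²)²`,
and if `λ_i = τ_n²i^{-1-2α}`, `κ_i ≍ i^{-p}` and `l ∈ S^q` with `q ≥ -β`, then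
`|LAKμ₀ - Lμ₀| ≲ ‖μ₀‖_β ‖l‖_q (nτ_n²)^{-min((β+q)/(1+2α+2p), 1)}`. -/
theorem stmt17 (p α β q : ℝ) (hp : 0 ≤ p) (hα : 0 < α) (hβ : 0 < β) (hq : -β ≤ q)
    (τ : ℕ → ℝ) (hτpos : ∀ n, 0 < τ n)
    (hnτ : Tendsto (fun n : ℕ => (n : ℝ) * (τ n) ^ 2) atTop atTop)
    (κ : ℕ → ℝ) (c₁ c₂ : ℝ) (hc₁ : 0 < c₁)
    (hκ : ∀ i : ℕ, c₁ * ((i : ℝ) + 1) ^ (-p) ≤ κ i ∧ κ i ≤ c₂ * ((i : ℝ) + 1) ^ (-p))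
    (μ₀ l : ℕ → ℝ)
    (hμ₀ : Summable (fun i : ℕ => (μ₀ i) ^ 2 * ((i : ℝ) + 1) ^ (2 * β)))
    (hl : Summable (fun i : ℕ => (l i) ^ 2 * ((i : ℝ) + 1) ^ (2 * q))) :
    let lam : ℕ → ℕ → ℝ := fun n i => (τ n) ^ 2 * ((i : ℝ) + 1) ^ (-1 - 2 * α)
    (∀ n : ℕ,
      (∑' i : ℕ, l i * μ₀ i / (1 + (n : ℝ) * lam n i * (κ i) ^ 2)) ^ 2 ≤
        (∑' i : ℕ, (μ₀ i) ^ 2 * ((i : ℝ) + 1) ^ (2 * β)) *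
          ∑' i : ℕ, (l i) ^ 2 * ((i : ℝ) + 1) ^ (-2 * β) /
            (1 + (n : ℝ) * lam n i * (κ i) ^ 2) ^ 2) ∧
    (∃ C : ℝ, 0 < C ∧ ∀ᶠ n : ℕ in atTop,
      |∑' i : ℕ, l i * μ₀ i / (1 + (n : ℝ) * lam n i * (κ i) ^ 2)| ≤
        C * Real.sqrt (∑' i : ℕ, (μ₀ i) ^ 2 * ((i : ℝ) + 1) ^ (2 * β)) *
          Real.sqrt (∑' i : ℕ, (l i) ^ 2 * ((i : ℝ) + 1) ^ (2 * q)) *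
          ((n : ℝ) * (τ n) ^ 2) ^ (-(min ((β + q) / (1 + 2 * α + 2 * p)) 1))) :=
  stmt17_general p α β q hp hα hq τ hnτ κ c₁ c₂ hc₁ hκ μ₀ l hμ₀ hl
end
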